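/- arXiv:1707.08937 — 7 statements merged into one kernel-verified Lean document; each statement's English description precedes it below -/
import Mathlib

section
/- Let F be a number field and n ≥ 1. Every nilpotent matrix X ∈ Mat_n(F) is SL_n(F)-conjugate to a matrix of the form D(d)·J_p: there exist a partition p of n, an element d ∈ F^×, and g ∈ SL_n(F) such that g X g^{-1} = D(d) J_p. Conversely, for every partition p of n and every d ∈ F^×, the matrix D(d)J_p is nilpotent, so each such matrix is a representative of an SL_n(F)-conjugacy class of nilpotent matrices. -/
/-- The lower-triangular "Jordan" matrix `J_p` attached to an ordered partition
`p = [p₁, p₂, …]` of `n`: block diagonal with lower Jordan blocks `J_{[pᵢ]}`.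
Concretely, the entry at `(j+1, j)` is `1` unless `j+1` is a partial sum of `p`
(i.e. a block boundary), and all other entries vanish. -/
def Jmat (F : Type*) [Field F] (n : ℕ) (p : List ℕ) : Matrix (Fin n) (Fin n) F :=
  fun i j => if (i : ℕ) = (j : ℕ) + 1 ∧ (j : ℕ) + 1 ∉ p.scanl (· + ·) 0 then 1 else 0

/-- The diagonal matrix `D(d) = diag(1, …, 1, d)`. -/
def Dmat (F : Type*) [Field F] (n : ℕ) (d : F) : Matrix (Fin n) (Fin n) F :=
  Matrix.diagonal (fun i => if (i : ℕ) = n - 1 then d else 1)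

/-!
A nilpotent endomorphism `f` of a finite-dimensional space has a basis of Jordan chains
`v, f v, …, f ^ (k - 1) v` with `f ^ k v = 0`. By induction on the dimension: lift the chains of
`f` on `range f` through `f`, which lengthens each of them by one, and complete their last vectors
to a basis of `ker f` by chains of length one. Sorting the chains by decreasing length and listing
them one after another turns the matrix of `f` into `J_p`, so `X` is `GL_n(F)`-conjugate to `J_p`
by some `P`. Replacing `P` by `D(det P)⁻¹ P` lands in `SL_n(F)` and changes the conjugate into
`D(det P)⁻¹ J_p D(det P) = D(det P)⁻¹ J_p`, because the last column of `J_p` vanishes.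
Conversely `D(d) J_p` is strictly lower triangular, so its characteristic polynomial is `X ^ n`.
-/

open Module Submodule

theorem List.mem_scanl_add_zero_iff {p : List ℕ} {t : ℕ} :
    t ∈ p.scanl (· + ·) 0 ↔ ∃ m ≤ p.length, (p.take m).sum = t := by
  simp [List.mem_iff_getElem, List.sum_eq_foldl_nat]

theorem List.sum_take_le_sum_take (p : List ℕ) {m m' : ℕ} (h : m ≤ m') :
    (p.take m).sum ≤ (p.take m').sum :=
  (List.take_sublist_take_left h).sum_le_sum (fun _ _ => Nat.zero_le _)

theorem List.sum_take_add_mem_scanl_iff {p : List ℕ} (hp : ∀ x ∈ p, 0 < x) {i j : ℕ}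
    (hi : i < p.length) (hj : j < p[i]) :
    (p.take i).sum + j + 1 ∈ p.scanl (· + ·) 0 ↔ j + 1 = p[i] := by
  have hsucc := List.sum_take_succ p i hi
  rw [List.mem_scanl_add_zero_iff]
  constructor
  · rintro ⟨m, hm, heq⟩
    rcases lt_trichotomy m (i + 1) with hlt | rfl | hgt
    · have := p.sum_take_le_sum_take (Nat.le_of_lt_succ hlt)
      omega
    · omega
    · have hi1 : i + 1 < p.length := by omega
      have := p.sum_take_le_sum_take (show i + 1 + 1 ≤ m by omega)
      have := List.sum_take_succ p (i + 1) hi1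
      have := hp _ (p.getElem_mem hi1)
      omega
  · exact fun h => ⟨i + 1, hi, by omega⟩

theorem List.sum_take_ofFn_eq_sum_castLE {r : ℕ} (k : Fin r → ℕ) (i : Fin r) :
    ((List.ofFn k).take i).sum = ∑ l : Fin i, k (Fin.castLE i.2.le l) := by
  rw [← Fin.ofFn_take_eq_take_ofFn i.2.le, List.sum_ofFn]
  rfl

theorem Submodule.top_le_of_range_le_map_of_ker_le {R M : Type*} [Ring R] [AddCommGroup M]
    [Module R M] {f : Module.End R M} {S : Submodule R M} (hrange : LinearMap.range f ≤ S.map f)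
    (hker : LinearMap.ker f ≤ S) : ⊤ ≤ S := by
  intro x _
  have hx : x ∈ (S.map f).comap f := hrange (LinearMap.mem_range_self f x)
  rwa [Submodule.comap_map_eq, sup_eq_left.mpr hker] at hx

section

variable {F V : Type*} [Field F] [AddCommGroup V] [Module F V]

theorem LinearIndependent.exists_span_union_eq [FiniteDimensional F V] {ι : Type*} [Fintype ι]
    {K : Submodule F V} {e : ι → V} (he : LinearIndependent F e) (heK : ∀ i, e i ∈ K) :
    ∃ (s : ℕ) (w : Fin s → V), Fintype.card ι + s = finrank F K ∧
      span F (Set.range e ∪ Set.range w) = K := by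
  set E := span F (Set.range e)
  have hEK : E ≤ K := span_le.mpr (Set.range_subset_iff.mpr heK)
  obtain ⟨C₀, hC₀⟩ := Submodule.exists_isCompl E
  set C := C₀ ⊓ K
  have hsup : E ⊔ C = K := by
    rw [← sup_inf_assoc_of_le C₀ hEK, hC₀.sup_eq_top, top_inf_eq]
  have hinf : E ⊓ C = ⊥ :=
    eq_bot_iff.mpr (hC₀.inf_eq_bot ▸ inf_le_inf_left E inf_le_left)
  refine ⟨finrank F C, C.subtype ∘ Module.finBasis F C, ?_, ?_⟩
  · rw [← finrank_span_eq_card he, ← hsup, ← add_zero (finrank F ↥(E ⊔ C)),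
      ← finrank_bot F V, ← hinf, Submodule.finrank_sup_add_finrank_inf_eq]
  · rw [span_union, Set.range_comp, span_image, (Module.finBasis F C).span_eq,
      Submodule.map_subtype_top, hsup]

def Module.End.restrictRange (f : Module.End F V) : Module.End F (LinearMap.range f) :=
  f.restrict fun x _ => LinearMap.mem_range_self f x

theorem Module.End.coe_restrictRange_pow_apply {f : Module.End F V} {x : V}
    {y : LinearMap.range f} (hxy : f x = y) (j : ℕ) :
    ((f.restrictRange ^ j) y : V) = (f ^ (j + 1)) x := by
  rw [restrictRange, pow_restrict, LinearMap.restrict_apply]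
  change (f ^ j) (y : V) = _
  rw [← hxy, pow_succ, mul_apply]

theorem Module.End.IsNilpotent.finrank_range_lt [FiniteDimensional F V] [Nontrivial V]
    {f : Module.End F V} (hf : IsNilpotent f) : finrank F (LinearMap.range f) < finrank F V := by
  refine Submodule.finrank_lt fun htop => hf.not_isUnit ?_
  have hsurj := LinearMap.range_eq_top.mp htop
  exact (Module.End.isUnit_iff f).mpr ⟨LinearMap.injective_iff_surjective.mpr hsurj, hsurj⟩

section Chains

variable {ι : Type*} [Fintype ι]

def chainFamily (f : Module.End F V) (k : ι → ℕ) (v : ι → V) : (Σ i, Fin (k i)) → V :=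
  fun x => (f ^ (x.2 : ℕ)) (v x.1)

structure IsJordanChains (f : Module.End F V) (k : ι → ℕ) (v : ι → V) : Prop where
  pos : ∀ i, 0 < k i
  pow_apply_eq_zero : ∀ i, (f ^ k i) (v i) = 0
  sum_eq_finrank : ∑ i, k i = finrank F V
  top_le_span : ⊤ ≤ span F (Set.range (chainFamily f k v))

namespace IsJordanChains

variable {f : Module.End F V} {k : ι → ℕ} {v : ι → V}

noncomputable def basis (h : IsJordanChains f k v) : Basis (Σ i, Fin (k i)) F V :=
  basisOfTopLeSpanOfCardEqFinrank _ h.top_le_span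
    (by rw [Fintype.card_sigma, ← h.sum_eq_finrank]; simp)

theorem coe_basis (h : IsJordanChains f k v) : ⇑h.basis = chainFamily f k v :=
  coe_basisOfTopLeSpanOfCardEqFinrank _ _ _

theorem linearIndependent_pow_pred (h : IsJordanChains f k v) :
    LinearIndependent F fun i => (f ^ (k i - 1)) (v i) := by
  have hlast : ∀ i, k i - 1 < k i := fun i => Nat.sub_lt (h.pos i) one_pos
  have hinj : Function.Injective fun i => (⟨i, ⟨k i - 1, hlast i⟩⟩ : Σ i, Fin (k i)) :=
    fun _ _ hij => congrArg Sigma.fst hij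
  simpa [Function.comp_def, h.coe_basis, chainFamily] using
    h.basis.linearIndependent.comp _ hinj

theorem comp_equiv (h : IsJordanChains f k v) {κ : Type*} [Fintype κ] (σ : κ ≃ ι) :
    IsJordanChains f (k ∘ σ) (v ∘ σ) where
  pos i := h.pos (σ i)
  pow_apply_eq_zero i := h.pow_apply_eq_zero (σ i)
  sum_eq_finrank := (Equiv.sum_comp σ k).trans h.sum_eq_finrank
  top_le_span := by
    have : chainFamily f k v ∘ Equiv.sigmaCongrLeft σ = chainFamily f (k ∘ σ) (v ∘ σ) :=
      rfl
    rw [← this, (Equiv.sigmaCongrLeft σ).surjective.range_comp]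
    exact h.top_le_span

theorem exists_antitone (h : IsJordanChains f k v) :
    ∃ (r : ℕ) (k' : Fin r → ℕ) (v' : Fin r → V),
      Antitone k' ∧ IsJordanChains f k' v' := by
  set e := (Fintype.equivFin ι).symm
  have hsorted := Tuple.monotone_sort (OrderDual.toDual ∘ k ∘ e)
  exact ⟨_, _, _, monotone_toDual_comp_iff.mp hsorted, h.comp_equiv ((Tuple.sort _).trans e)⟩

end IsJordanChains

end Chains

theorem IsJordanChains.range_le_map_span_chainFamily {f : Module.End F V} {ι : Type*}
    [Fintype ι] {k : ι → ℕ} {u : ι → LinearMap.range f}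
    (h : IsJordanChains f.restrictRange k u) {v : ι → V} (hv : ∀ i, f (v i) = u i) :
    LinearMap.range f ≤ (span F (Set.range (chainFamily f k v))).map f := calc
  LinearMap.range f = (⊤ : Submodule F (LinearMap.range f)).map (LinearMap.range f).subtype :=
      (map_subtype_top _).symm
  _ ≤ (span F (Set.range (chainFamily f.restrictRange k u))).map _ := map_mono h.top_le_span
  _ = span F (Set.range ((LinearMap.range f).subtype ∘ chainFamily f.restrictRange k u)) := by
      rw [map_span, Set.range_comp]
  _ = (span F (Set.range (chainFamily f k v))).map f := by
      rw [map_span, ← Set.range_comp]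
      congr 2
      funext x
      simp [chainFamily, Module.End.coe_restrictRange_pow_apply (hv x.1), pow_succ']

theorem IsJordanChains.lift [FiniteDimensional F V] {f : Module.End F V} {ι : Type} [Fintype ι]
    {k : ι → ℕ} {u : ι → LinearMap.range f} (h : IsJordanChains f.restrictRange k u)
    {v : ι → V} (hv : ∀ i, f (v i) = u i) :
    ∃ (κ : Type) (_ : Fintype κ) (k' : κ → ℕ) (v' : κ → V), IsJordanChains f k' v' := by
  have hpow i := Module.End.coe_restrictRange_pow_apply (hv i)
  have hend : ∀ i, (f ^ (k i + 1)) (v i) = 0 := fun i => by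
    rw [← hpow, h.pow_apply_eq_zero, ZeroMemClass.coe_zero]
  have hends_indep : LinearIndependent F fun i => (f ^ k i) (v i) := by
    have hk : ∀ i, k i - 1 + 1 = k i := fun i => Nat.sub_add_cancel (h.pos i)
    simpa [Function.comp_def, hpow, hk] using
      h.linearIndependent_pow_pred.map' _ (LinearMap.range f).ker_subtype
  have hends_ker : ∀ i, (f ^ k i) (v i) ∈ LinearMap.ker f := fun i => by
    rw [LinearMap.mem_ker, ← Module.End.mul_apply, ← pow_succ', hend]
  obtain ⟨s, w, hcard, hspan⟩ := hends_indep.exists_span_union_eq hends_ker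
  have hw : ∀ l, f (w l) = 0 := fun l =>
    LinearMap.mem_ker.mp (hspan ▸ subset_span (Set.mem_union_right _ (Set.mem_range_self l)))
  refine ⟨ι ⊕ Fin s, inferInstance, Sum.elim (fun i => k i + 1) 1, Sum.elim v w,
    ⟨?_, ?_, ?_, ?_⟩⟩
  · rintro (i | l) <;> simp
  · rintro (i | l)
    · exact hend i
    · simpa using hw l
  · have := LinearMap.finrank_range_add_finrank_ker f
    simp only [Fintype.sum_sum_type, Sum.elim_inl, Sum.elim_inr, Finset.sum_add_distrib]
    simp [← h.sum_eq_finrank] at *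
    omega
  · set S := span F (Set.range (chainFamily f (Sum.elim (fun i => k i + 1) 1) (Sum.elim v w)))
    have hchain : ∀ i, ∀ j ≤ k i, (f ^ j) (v i) ∈ S := fun i j hj =>
      subset_span ⟨⟨Sum.inl i, ⟨j, Nat.lt_succ_of_le hj⟩⟩, rfl⟩
    refine top_le_of_range_le_map_of_ker_le ((h.range_le_map_span_chainFamily hv).trans
      (map_mono (span_le.mpr ?_))) ?_
    · rintro _ ⟨⟨i, j⟩, rfl⟩
      exact hchain i j j.2.le
    · rw [← hspan, span_le, Set.union_subset_iff, Set.range_subset_iff, Set.range_subset_iff]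
      exact ⟨fun i => hchain i (k i) le_rfl,
        fun l => subset_span ⟨⟨Sum.inr l, ⟨0, Nat.one_pos⟩⟩, by simp [chainFamily]⟩⟩

theorem Module.End.IsNilpotent.exists_isJordanChains [FiniteDimensional F V]
    {f : Module.End F V} (hf : IsNilpotent f) :
    ∃ (ι : Type) (_ : Fintype ι) (k : ι → ℕ) (v : ι → V), IsJordanChains f k v := by
  induction hn : finrank F V using Nat.strong_induction_on generalizing V with
  | _ n ih =>
  rcases Nat.eq_zero_or_pos n with rfl | hpos
  · have : Subsingleton V := Module.finrank_zero_iff.mp hn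
    refine ⟨Empty, inferInstance, Empty.elim, Empty.elim, ⟨nofun, nofun, by simp [hn], ?_⟩⟩
    intro x _
    rw [Subsingleton.elim x 0]
    exact zero_mem _
  · have : Nontrivial V := Module.finrank_pos_iff.mp (hn ▸ hpos)
    obtain ⟨ι, _, k, u, h⟩ := ih _ (hn ▸ Module.End.IsNilpotent.finrank_range_lt hf)
      (Module.End.isNilpotent.restrict _ hf) rfl
    choose v hv using fun i => LinearMap.mem_range.mp (u i).2
    exact h.lift hv

theorem IsJordanChains.toMatrix_reindex_eq_Jmat {n r : ℕ} {f : Module.End F V}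
    {k : Fin r → ℕ} {v : Fin r → V} (h : IsJordanChains f k v) (hn : finrank F V = n) :
    let b := h.basis.reindex (finSigmaFinEquiv.trans (finCongr (h.sum_eq_finrank.trans hn)))
    LinearMap.toMatrix b b f = Jmat F n (List.ofFn k) := by
  intro b
  set E := finSigmaFinEquiv.trans (finCongr (h.sum_eq_finrank.trans hn))
  have hE : ∀ x, (E x : ℕ) = ((List.ofFn k).take x.1).sum + x.2 := fun x => by
    simp [E, List.sum_take_ofFn_eq_sum_castLE]
  have hpos : ∀ x ∈ List.ofFn k, 0 < x := by
    simpa [List.forall_mem_ofFn_iff] using h.pos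
  ext a c
  obtain ⟨⟨i, j⟩, rfl⟩ := E.surjective c
  -- the column `E ⟨i, j⟩` ends a block of `J_p` exactly when `j` ends the `i`-th chain
  have hboundary := List.sum_take_add_mem_scanl_iff hpos (i := i) (by simp) (j := j) (by simp)
  simp only [List.getElem_ofFn, Fin.eta] at hboundary
  have hb : ∀ x, b (E x) = (f ^ (x.2 : ℕ)) (v x.1) := fun x => by
    rw [Basis.reindex_apply, Equiv.symm_apply_apply, h.coe_basis, chainFamily]
  have hfb : f (b (E ⟨i, j⟩)) = (f ^ ((j : ℕ) + 1)) (v i) := by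
    rw [hb, pow_succ', Module.End.mul_apply]
  rw [LinearMap.toMatrix_apply, hfb, Jmat, hE]
  dsimp only
  by_cases hj : (j : ℕ) + 1 < k i
  · have hnext : (f ^ ((j : ℕ) + 1)) (v i) = b (E ⟨i, ⟨j + 1, hj⟩⟩) :=
      (hb ⟨i, ⟨j + 1, hj⟩⟩).symm
    have hEa : E ⟨i, ⟨j + 1, hj⟩⟩ = a ↔
        (a : ℕ) = ((List.ofFn k).take i).sum + j + 1 := by
      rw [Fin.ext_iff, hE, eq_comm, add_assoc]
    rw [hnext, b.repr_self, Finsupp.single_apply]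
    simp only [hEa, hboundary, hj.ne, not_false_eq_true, and_true]
  · rw [show (j : ℕ) + 1 = k i by omega, h.pow_apply_eq_zero, map_zero, Finsupp.zero_apply,
      if_neg fun hc => hc.2 (hboundary.mpr (by omega))]

theorem Module.End.IsNilpotent.exists_basis_toMatrix_eq_Jmat [FiniteDimensional F V] {n : ℕ}
    {f : Module.End F V} (hf : IsNilpotent f) (hn : finrank F V = n) :
    ∃ p : List ℕ, p.Pairwise (· ≥ ·) ∧ (∀ k ∈ p, 0 < k) ∧ p.sum = n ∧
      ∃ b : Basis (Fin n) F V, LinearMap.toMatrix b b f = Jmat F n p := by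
  obtain ⟨ι, _, k, v, h⟩ := Module.End.IsNilpotent.exists_isJordanChains hf
  obtain ⟨r, k, v, hanti, h⟩ := h.exists_antitone
  refine ⟨List.ofFn k, List.pairwise_ofFn.mpr fun i j hij => hanti hij.le, ?_, ?_, _,
    h.toMatrix_reindex_eq_Jmat hn⟩
  · simpa [List.forall_mem_ofFn_iff] using h.pos
  · rw [List.sum_ofFn, h.sum_eq_finrank, hn]

end

theorem Matrix.exists_conj_eq_Jmat_of_isNilpotent {F : Type*} [Field F] {n : ℕ}
    {X : Matrix (Fin n) (Fin n) F} (hX : IsNilpotent X) :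
    ∃ p : List ℕ, p.Pairwise (· ≥ ·) ∧ (∀ k ∈ p, 0 < k) ∧ p.sum = n ∧
      ∃ P Q : Matrix (Fin n) (Fin n) F, P * Q = 1 ∧ P * X * Q = Jmat F n p := by
  obtain ⟨p, hsort, hpos, hsum, b, hb⟩ := Module.End.IsNilpotent.exists_basis_toMatrix_eq_Jmat
    ((Matrix.isNilpotent_toLin'_iff X).mpr hX) (Module.finrank_fin_fun F)
  set e := Pi.basisFun F (Fin n)
  refine ⟨p, hsort, hpos, hsum, b.toMatrix e, e.toMatrix b, b.toMatrix_mul_toMatrix_flip e, ?_⟩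
  rw [← hb, ← basis_toMatrix_mul_linearMap_toMatrix_mul_basis_toMatrix (b := b) (b' := e)
      (c := b) (c' := e),
    LinearMap.toMatrix_eq_toMatrix', LinearMap.toMatrix'_toLin']

theorem Matrix.IsLowerTriangular.isNilpotent {R ι : Type*} [CommRing R] [Fintype ι]
    [DecidableEq ι] [LinearOrder ι] {M : Matrix ι ι R} (hM : M.IsLowerTriangular)
    (hdiag : ∀ i, M i i = 0) : IsNilpotent M := by
  have hchar : M.charpoly = Polynomial.X ^ Fintype.card ι := by
    simp [Matrix.charpoly, Matrix.det_of_isLowerTriangular _ hM.charmatrix,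
      Matrix.charmatrix_apply_eq, hdiag]
  exact ⟨Fintype.card ι, by simpa [hchar] using M.aeval_self_charpoly⟩

section DJ

variable {F : Type*} [Field F] {n : ℕ}

theorem Jmat_apply_eq_zero_of_le (p : List ℕ) {i j : Fin n} (hij : (i : ℕ) ≤ j) :
    Jmat F n p i j = 0 :=
  if_neg (by omega)

theorem Dmat_mul_Dmat (a b : F) : Dmat F n a * Dmat F n b = Dmat F n (a * b) := by
  simp only [Dmat, Matrix.diagonal_mul_diagonal]
  congr 1
  ext i
  split_ifs <;> simp

theorem Dmat_one : Dmat F n 1 = 1 := by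
  simp [Dmat]

theorem det_Dmat (hn : 1 ≤ n) (d : F) : (Dmat F n d).det = d := by
  rw [Dmat, Matrix.det_diagonal,
    Finset.prod_eq_single ⟨n - 1, by omega⟩ (fun j _ hj => ?_) (by simp)]
  · simp
  · rw [if_neg (fun h => hj (Fin.ext h))]

theorem Jmat_mul_Dmat (p : List ℕ) (d : F) : Jmat F n p * Dmat F n d = Jmat F n p := by
  ext i j
  rw [Dmat, Matrix.mul_diagonal]
  split_ifs with hj
  · rw [Jmat_apply_eq_zero_of_le p (by omega), zero_mul]
  · rw [mul_one]

theorem isNilpotent_Dmat_mul_Jmat (p : List ℕ) (d : F) :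
    IsNilpotent (Dmat F n d * Jmat F n p) := by
  refine Matrix.IsLowerTriangular.isNilpotent (fun i j hij => ?_) (fun i => ?_) <;>
    rw [Dmat, Matrix.diagonal_mul, Jmat_apply_eq_zero_of_le p, mul_zero]
  · exact le_of_lt hij
  · exact le_rfl

theorem exists_specialLinearGroup_conj_eq_Dmat_mul (hn : 1 ≤ n)
    {X J P Q : Matrix (Fin n) (Fin n) F} (hPQ : P * Q = 1) (hconj : P * X * Q = J)
    (hJ : ∀ d, J * Dmat F n d = J) :
    ∃ d ≠ 0, ∃ g : Matrix.SpecialLinearGroup (Fin n) F,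
      g.val * X * (g⁻¹).val = Dmat F n d * J := by
  set δ := P.det
  have hδ : δ * Q.det = 1 := by rw [← Matrix.det_mul, hPQ, Matrix.det_one]
  have hδ0 : δ ≠ 0 := left_ne_zero_of_mul_eq_one hδ
  let g : Matrix.SpecialLinearGroup (Fin n) F :=
    ⟨Dmat F n δ⁻¹ * P, by rw [Matrix.det_mul, det_Dmat hn, inv_mul_cancel₀ hδ0]⟩
  have hg_inv : (g⁻¹).val = Q * Dmat F n δ := by
    have hgQ : g.val * (Q * Dmat F n δ) = 1 := by
      simp only [g, mul_assoc, ← mul_assoc P, hPQ, one_mul, Dmat_mul_Dmat, inv_mul_cancel₀ hδ0,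
        Dmat_one]
    calc (g⁻¹).val = (g⁻¹).val * (g.val * (Q * Dmat F n δ)) := by rw [hgQ, mul_one]
      _ = Q * Dmat F n δ := by
        rw [← mul_assoc, ← Matrix.SpecialLinearGroup.coe_mul, inv_mul_cancel,
          Matrix.SpecialLinearGroup.coe_one, one_mul]
  refine ⟨δ⁻¹, inv_ne_zero hδ0, g, ?_⟩
  calc g.val * X * (g⁻¹).val = Dmat F n δ⁻¹ * (P * X * Q) * Dmat F n δ := by
        simp only [hg_inv, g, mul_assoc]
    _ = Dmat F n δ⁻¹ * J := by rw [hconj, mul_assoc, hJ]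

end DJ

theorem nilpotent_conj_DJ_general (F : Type*) [Field F] (n : ℕ) (hn : 1 ≤ n) :
    (∀ X : Matrix (Fin n) (Fin n) F, IsNilpotent X →
      ∃ (p : List ℕ) (d : F) (g : Matrix.SpecialLinearGroup (Fin n) F),
        List.Pairwise (· ≥ ·) p ∧ (∀ k ∈ p, 0 < k) ∧ p.sum = n ∧ d ≠ 0 ∧
          g.val * X * (g⁻¹).val = Dmat F n d * Jmat F n p) ∧
    (∀ (p : List ℕ) (d : F), List.Pairwise (· ≥ ·) p → (∀ k ∈ p, 0 < k) → p.sum = n →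
      d ≠ 0 → IsNilpotent (Dmat F n d * Jmat F n p)) := by
  refine ⟨fun X hX => ?_, fun p d _ _ _ _ => isNilpotent_Dmat_mul_Jmat p d⟩
  obtain ⟨p, hsort, hpos, hsum, P, Q, hPQ, hconj⟩ :=
    Matrix.exists_conj_eq_Jmat_of_isNilpotent hX
  obtain ⟨d, hd, g, hg⟩ :=
    exists_specialLinearGroup_conj_eq_Dmat_mul hn hPQ hconj (Jmat_mul_Dmat p)
  exact ⟨p, d, g, hsort, hpos, hsum, hd, hg⟩

/-- Every nilpotent `X ∈ Mat_n(F)` over a number field `F` is `SL_n(F)`-conjugate to a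
matrix `D(d)·J_p` for some partition `p` of `n` and some `d ∈ F^×`; conversely every
matrix `D(d)·J_p` is nilpotent (hence represents an `SL_n(F)`-conjugacy class of
nilpotent matrices). -/
theorem nilpotent_conj_DJ (F : Type*) [Field F] [NumberField F] (n : ℕ) (hn : 1 ≤ n) :
    (∀ X : Matrix (Fin n) (Fin n) F, IsNilpotent X →
      ∃ (p : List ℕ) (d : F) (g : Matrix.SpecialLinearGroup (Fin n) F),
        List.Pairwise (· ≥ ·) p ∧ (∀ k ∈ p, 0 < k) ∧ p.sum = n ∧ d ≠ 0 ∧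
          g.val * X * (g⁻¹).val = Dmat F n d * Jmat F n p) ∧
    (∀ (p : List ℕ) (d : F), List.Pairwise (· ≥ ·) p → (∀ k ∈ p, 0 < k) → p.sum = n →
      d ≠ 0 → IsNilpotent (Dmat F n d * Jmat F n p)) :=
  nilpotent_conj_DJ_general F n hn
end

section
/- Let F be a field, n ≥ 2 and 1 ≤ m ≤ n−1. Let Y be any (n−m)×m matrix over F and let r be the rank of Y (so 0 ≤ r ≤ min(m, n−m)). Then there exist A ∈ GL_m(F) and C ∈ GL_{n−m}(F) with det A · det C = 1, and an element d ∈ F^×, such that C Y A^{-1} = Y_r(d). (For r = 0 this means C Y A^{-1} = 0, i.e. Y = 0.) -/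
/-!
Pick complements `V'` of `ker Y` and `W'` of `range Y`. A basis of `ker Y`, the preimage in `V'`
of a basis of `range Y`, that basis of `range Y` and a basis of `W'` are bases in which `Y` has
matrix `fromBlocks 0 1 0 0`; listing the preimage vectors in reverse order turns it into `Y_r(1)`.
Multiplying on the left by the diagonal matrix with `d = (det A · det C)⁻¹` in row `r` and `1`
elsewhere then rescales the entry in row `r` to `d` and makes the determinants multiply to `1`.
-/

/-- The `(n−m)×m` matrix `Y_r(d)`: its only nonzero entries are on the anti-diagonal of
its top-right `r×r` block; in 1-indexed notation, `Y_r(d)_{i, m+1−i} = 1` for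
`1 ≤ i ≤ r−1` and `Y_r(d)_{r, m+1−r} = d`. -/
def Ymat (F : Type*) [Field F] (n m r : ℕ) (d : F) : Matrix (Fin (n - m)) (Fin m) F :=
  fun i j =>
    if (i : ℕ) < r ∧ (j : ℕ) + (i : ℕ) + 1 = m then
      (if (i : ℕ) = r - 1 then d else 1)
    else 0

open Module LinearMap

theorem LinearMap.exists_linearEquiv_range_of_isCompl_ker {R V W : Type*} [Ring R]
    [AddCommGroup V] [Module R V] [AddCommGroup W] [Module R W] (f : V →ₗ[R] W)
    {C : Submodule R V} (h : IsCompl (ker f) C) :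
    ∃ e : C ≃ₗ[R] range f, ∀ x, (e x : W) = f x :=
  ⟨(Submodule.quotientEquivOfIsCompl _ _ h).symm ≪≫ₗ f.quotKerEquivRange, fun x => by
    simp [Submodule.quotientEquivOfIsCompl_symm_apply]⟩

theorem LinearMap.exists_basis_toMatrix_eq_fromBlocks {K V W : Type*} [Field K]
    [AddCommGroup V] [Module K V] [FiniteDimensional K V]
    [AddCommGroup W] [Module K W] [FiniteDimensional K W] (f : V →ₗ[K] W) {p q r : ℕ}
    (hp : finrank K V = p) (hq : finrank K W = q) (hr : finrank K (range f) = r) :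
    ∃ (b : Basis (Fin (p - r) ⊕ Fin r) K V) (c : Basis (Fin r ⊕ Fin (q - r)) K W),
      toMatrix b c f = Matrix.fromBlocks 0 1 0 0 := by
  obtain ⟨V', hV'⟩ := Submodule.exists_isCompl (ker f)
  obtain ⟨W', hW'⟩ := Submodule.exists_isCompl (range f)
  obtain ⟨e, he⟩ := f.exists_linearEquiv_range_of_isCompl_ker hV'
  have hker : finrank K (ker f) = p - r := by
    have := f.finrank_range_add_finrank_ker; omega
  have hW'rank : finrank K W' = q - r := by
    have := Submodule.finrank_add_eq_of_isCompl hW'; omega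
  let bR := finBasisOfFinrankEq K _ hr
  let b := ((finBasisOfFinrankEq K _ hker).prod (bR.map e.symm)).map
    (Submodule.prodEquivOfIsCompl _ _ hV')
  let c := (bR.prod (finBasisOfFinrankEq K _ hW'rank)).map
    (Submodule.prodEquivOfIsCompl _ _ hW')
  have hb_ker (k : Fin (p - r)) : f (b (.inl k)) = 0 := by
    simp [b, Submodule.coe_prodEquivOfIsCompl']
  have hb_range (j : Fin r) : f (b (.inr j)) = c (.inl j) := by
    simp [b, c, Submodule.coe_prodEquivOfIsCompl', ← he]
  refine ⟨b, c, ?_⟩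
  ext (i | i) (j | j) <;>
    simp [toMatrix_apply, hb_ker, hb_range, Finsupp.single_apply, Matrix.one_apply, eq_comm]

theorem Matrix.exists_GL_mul_mul_inv_eq_toMatrix {R ι κ : Type*} [CommRing R]
    [Fintype ι] [DecidableEq ι] [Fintype κ] [DecidableEq κ] (Y : Matrix κ ι R)
    (b : Basis ι R (ι → R)) (c : Basis κ R (κ → R)) :
    ∃ (A : GL ι R) (C : GL κ R), C.val * Y * (A⁻¹).val = toMatrix b c Y.mulVecLin := by
  set e := Pi.basisFun R ι
  set e' := Pi.basisFun R κ
  refine ⟨⟨b.toMatrix e, e.toMatrix b, b.toMatrix_mul_toMatrix_flip e,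
      e.toMatrix_mul_toMatrix_flip b⟩,
    ⟨c.toMatrix e', e'.toMatrix c, c.toMatrix_mul_toMatrix_flip e',
      e'.toMatrix_mul_toMatrix_flip c⟩, ?_⟩
  have hY : toMatrix e e' Y.mulVecLin = Y := toMatrix'_toLin' Y
  show c.toMatrix e' * Y * e.toMatrix b = _
  rw [← basis_toMatrix_mul_linearMap_toMatrix_mul_basis_toMatrix b e c e', hY]

theorem exists_Ymat_one_submatrix_eq_fromBlocks (F : Type*) [Field F] {n m r : ℕ} (hm : r ≤ m)
    (hnm : r ≤ n - m) :
    ∃ (σ : Fin (m - r) ⊕ Fin r ≃ Fin m) (τ : Fin r ⊕ Fin (n - m - r) ≃ Fin (n - m)),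
      (Ymat F n m r 1).submatrix τ σ = Matrix.fromBlocks 0 1 0 0 := by
  refine ⟨(Equiv.sumCongr (.refl _) Fin.revPerm).trans
    (finSumFinEquiv.trans (finCongr (by omega))), finSumFinEquiv.trans (finCongr (by omega)), ?_⟩
  ext (i | i) (j | j) <;> simp [Ymat, Matrix.one_apply, Fin.ext_iff] <;>
    first | omega | split_ifs <;> first | rfl | (exfalso; omega)

theorem Matrix.exists_GL_mul_mul_inv_eq_Ymat_one {F : Type*} [Field F] {n m : ℕ}
    (Y : Matrix (Fin (n - m)) (Fin m) F) :
    ∃ (A : GL (Fin m) F) (C : GL (Fin (n - m)) F),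
      C.val * Y * (A⁻¹).val = Ymat F n m Y.rank 1 := by
  obtain ⟨σ, τ, hYmat⟩ :=
    exists_Ymat_one_submatrix_eq_fromBlocks F Y.rank_le_width Y.rank_le_height
  obtain ⟨b, c, hbc⟩ := Y.mulVecLin.exists_basis_toMatrix_eq_fromBlocks (finrank_fin_fun F)
    (finrank_fin_fun F) (r := Y.rank) rfl
  obtain ⟨A, C, hAC⟩ := Y.exists_GL_mul_mul_inv_eq_toMatrix (b.reindex σ) (c.reindex τ)
  refine ⟨A, C, ?_⟩
  have hreindex : toMatrix (b.reindex σ) (c.reindex τ) Y.mulVecLin =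
      (toMatrix b c Y.mulVecLin).submatrix τ.symm σ.symm := by
    ext; simp [toMatrix_apply]
  rw [hAC, hreindex, hbc, ← hYmat, Matrix.submatrix_submatrix]
  simp

theorem diagonal_mulSingle_mul_Ymat_one {F : Type*} [Field F] {n m r : ℕ} {i₀ : Fin (n - m)}
    (hi₀ : (i₀ : ℕ) = r - 1) (d : F) :
    Matrix.diagonal (Pi.mulSingle i₀ d) * Ymat F n m r 1 = Ymat F n m r d := by
  ext i j
  by_cases hi : i = i₀
  · subst hi; simp [Ymat, hi₀]
  · have : (i : ℕ) ≠ r - 1 := fun h => hi (Fin.ext (h.trans hi₀.symm))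
    simp [Ymat, hi, this]

theorem levi_normal_form_general (F : Type*) [Field F] (n m : ℕ)
    (h1 : 1 ≤ m) (h2 : m ≤ n - 1)
    (Y : Matrix (Fin (n - m)) (Fin m) F) :
    ∃ (A : Matrix.GeneralLinearGroup (Fin m) F)
      (C : Matrix.GeneralLinearGroup (Fin (n - m)) F) (d : F),
      d ≠ 0 ∧
      A.val.det * C.val.det = 1 ∧
      C.val * Y * (A⁻¹).val = Ymat F n m Y.rank d := by
  obtain ⟨A, C, hAC⟩ := Y.exists_GL_mul_mul_inv_eq_Ymat_one
  have hdet : A.val.det * C.val.det ≠ 0 := mul_ne_zero A.det_ne_zero C.det_ne_zero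
  set d := (A.val.det * C.val.det)⁻¹
  let i₀ : Fin (n - m) := ⟨Y.rank - 1, by have := Y.rank_le_height; omega⟩
  have hD : (Matrix.diagonal (Pi.mulSingle i₀ d)).det = d := by
    simp [Matrix.det_diagonal, Finset.prod_pi_mulSingle']
  let D := Matrix.GeneralLinearGroup.mkOfDetNeZero _ (by rw [hD]; exact inv_ne_zero hdet)
  have hDval : D.val = Matrix.diagonal (Pi.mulSingle i₀ d) := rfl
  refine ⟨A, D * C, d, inv_ne_zero hdet, ?_, ?_⟩
  · rw [Units.val_mul, Matrix.det_mul, hDval, hD, mul_left_comm, inv_mul_cancel₀ hdet]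
  · rw [Units.val_mul, Matrix.mul_assoc, Matrix.mul_assoc, ← Matrix.mul_assoc C.val, hAC]
    exact diagonal_mulSingle_mul_Ymat_one rfl d

/-- Normal form for the Levi action: any `(n−m)×m` matrix `Y` over a field `F` of rank `r`
can be brought to the form `Y_r(d)` for some `d ∈ F^×` by `Y ↦ C Y A⁻¹` with
`A ∈ GL_m(F)`, `C ∈ GL_{n−m}(F)` and `det A · det C = 1`. -/
theorem levi_normal_form (F : Type*) [Field F] (n m : ℕ)
    (h1 : 1 ≤ m) (h2 : m ≤ n - 1) (hn : 2 ≤ n)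
    (Y : Matrix (Fin (n - m)) (Fin m) F) :
    ∃ (A : Matrix.GeneralLinearGroup (Fin m) F)
      (C : Matrix.GeneralLinearGroup (Fin (n - m)) F) (d : F),
      d ≠ 0 ∧
      A.val.det * C.val.det = 1 ∧
      C.val * Y * (A⁻¹).val = Ymat F n m Y.rank d :=
  levi_normal_form_general F n m h1 h2 Y
end

section
/- Let F be a field, n ≥ 2 and 1 ≤ m ≤ n−1. Let Y be an (n−m)×m matrix over F of rank r, and suppose 2r < n. Then there exist A ∈ GL_m(F) and C ∈ GL_{n−m}(F) with det A · det C = 1 such that C Y A^{-1} = Y_r(1), i.e. the scalar d in the normal form can be taken equal to 1. (Note that 2r = n forces m = r = n−m, so 2r < n is exactly the paper's condition that (n, m, r) is not of the form n = 2r = 2m.) -/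
set_option maxHeartbeats 1000000

open Matrix Module

lemma det_val_inv_unit {k : Type*} [Fintype k] [DecidableEq k] {F : Type*} [Field F]
    (U : (Matrix k k F)ˣ) : ((U⁻¹ : (Matrix k k F)ˣ) : Matrix k k F).det = (U.val.det)⁻¹ := by
  have h : U.val.det * ((U⁻¹ : (Matrix k k F)ˣ) : Matrix k k F).det = 1 := by
    rw [← Matrix.det_mul, Units.mul_inv, Matrix.det_one]
  exact (inv_eq_of_mul_eq_one_right h).symm

lemma exists_equiv_normal_form (F : Type*) [Field F] (p m : ℕ) (hm : 1 ≤ m) (hp : 1 ≤ p)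
    (Y : Matrix (Fin p) (Fin m) F) :
    ∃ (P : (Matrix (Fin p) (Fin p) F)ˣ) (Q : (Matrix (Fin m) (Fin m) F)ˣ),
      (P : Matrix (Fin p) (Fin p) F) * Y * (Q : Matrix (Fin m) (Fin m) F) =
        Matrix.of (fun (i : Fin p) (j : Fin m) =>
          if (i : ℕ) < Y.rank ∧ (j : ℕ) + (i : ℕ) + 1 = m then (1 : F) else 0) := by
  classical
  set r := Y.rank with hrdef
  set f := Y.mulVecLin with hfdef
  have hrm : r ≤ m := by simpa using Y.rank_le_card_width
  have hrp : r ≤ p := by simpa using Y.rank_le_card_height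
  have hrange : finrank F (LinearMap.range f) = r := rfl
  have hker : finrank F (LinearMap.ker f) = m - r := by
    have h := LinearMap.finrank_range_add_finrank_ker f
    rw [hrange] at h
    simp only [Module.finrank_pi, Fintype.card_fin] at h
    omega
  obtain ⟨W, hW⟩ := Submodule.exists_isCompl (LinearMap.range f)
  have hWrank : finrank F W = p - r := by
    have h := Submodule.finrank_add_eq_of_isCompl hW
    rw [hrange] at h
    simp only [Module.finrank_pi, Fintype.card_fin] at h
    omega
  let d : Basis (Fin r) F (LinearMap.range f) := Module.finBasisOfFinrankEq F _ hrange
  let k : Basis (Fin (m - r)) F (LinearMap.ker f) := Module.finBasisOfFinrankEq F _ hker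
  let e : Basis (Fin (p - r)) F W := Module.finBasisOfFinrankEq F _ hWrank
  have hex : ∀ i : Fin r, ∃ x, f x = (d i : Fin p → F) := fun i => (d i).2
  choose u hu using hex
  set v : (Fin (m - r) ⊕ Fin r) → (Fin m → F) :=
    Sum.elim (fun i => (k i : Fin m → F)) (fun i => u i.rev) with hvdef
  set w : (Fin r ⊕ Fin (p - r)) → (Fin p → F) :=
    Sum.elim (fun i => (d i : Fin p → F)) (fun i => (e i : Fin p → F)) with hwdef
  -- independence of w
  have hw : LinearIndependent F w := by
    rw [Fintype.linearIndependent_iff]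
    intro g hg
    rw [Fintype.sum_sum_type] at hg
    have hx : (∑ i : Fin r, g (Sum.inl i) • w (Sum.inl i)) ∈ LinearMap.range f :=
      Submodule.sum_mem _ (fun i _ => Submodule.smul_mem _ _ (d i).2)
    have hy : (∑ i : Fin (p - r), g (Sum.inr i) • w (Sum.inr i)) ∈ W :=
      Submodule.sum_mem _ (fun i _ => Submodule.smul_mem _ _ (e i).2)
    have hx' : (∑ i : Fin r, g (Sum.inl i) • w (Sum.inl i)) ∈ W := by
      have : (∑ i : Fin r, g (Sum.inl i) • w (Sum.inl i)) =
          -(∑ i : Fin (p - r), g (Sum.inr i) • w (Sum.inr i)) := by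
        rw [eq_neg_iff_add_eq_zero]; exact hg
      rw [this]; exact neg_mem hy
    have hx0 : (∑ i : Fin r, g (Sum.inl i) • w (Sum.inl i)) = 0 := by
      have := hW.disjoint.le_bot ⟨hx, hx'⟩
      simpa using this
    have hy0 : (∑ i : Fin (p - r), g (Sum.inr i) • w (Sum.inr i)) = 0 := by
      rw [hx0, zero_add] at hg; exact hg
    have hgl : ∀ i : Fin r, g (Sum.inl i) = 0 := by
      have : ((∑ i : Fin r, g (Sum.inl i) • d i : LinearMap.range f) : Fin p → F) = 0 := by
        push_cast
        simpa [hwdef] using hx0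
      have h2 : (∑ i : Fin r, g (Sum.inl i) • d i : LinearMap.range f) = 0 :=
        Subtype.coe_injective (by simpa using this)
      exact Fintype.linearIndependent_iff.mp d.linearIndependent _ h2
    have hgr : ∀ i : Fin (p - r), g (Sum.inr i) = 0 := by
      have : ((∑ i : Fin (p - r), g (Sum.inr i) • e i : W) : Fin p → F) = 0 := by
        push_cast
        simpa [hwdef] using hy0
      have h2 : (∑ i : Fin (p - r), g (Sum.inr i) • e i : W) = 0 :=
        Subtype.coe_injective (by simpa using this)
      exact Fintype.linearIndependent_iff.mp e.linearIndependent _ h2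
    intro i
    cases i with
    | inl t => exact hgl t
    | inr t => exact hgr t
  -- independence of v
  have hv : LinearIndependent F v := by
    rw [Fintype.linearIndependent_iff]
    intro g hg
    rw [Fintype.sum_sum_type] at hg
    have h2 := congrArg f hg
    rw [map_add, map_sum, map_sum, map_zero] at h2
    simp only [_root_.map_smul] at h2
    have hk0 : ∀ t : Fin (m - r), f (v (Sum.inl t)) = 0 := fun t => (k t).2
    have hu0 : ∀ t : Fin r, f (v (Sum.inr t)) = (d t.rev : Fin p → F) := fun t => hu t.rev
    rw [Finset.sum_congr rfl (fun t _ => by rw [hk0 t, smul_zero])] at h2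
    rw [Finset.sum_const_zero, zero_add] at h2
    rw [Finset.sum_congr rfl (fun t _ => by rw [hu0 t])] at h2
    -- reindex by rev
    have h3 : (∑ t : Fin r, g (Sum.inr t.rev) • (d t : Fin p → F)) = 0 := by
      rw [← h2]
      exact Fintype.sum_equiv (Fin.revPerm) _ _ (fun t => by simp)
    have hgr : ∀ t : Fin r, g (Sum.inr t.rev) = 0 := by
      have : ((∑ t : Fin r, g (Sum.inr t.rev) • d t : LinearMap.range f) : Fin p → F) = 0 := by
        push_cast; simpa using h3
      have h4 : (∑ t : Fin r, g (Sum.inr t.rev) • d t : LinearMap.range f) = 0 :=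
        Subtype.coe_injective (by simpa using this)
      exact Fintype.linearIndependent_iff.mp d.linearIndependent _ h4
    have hgr' : ∀ t : Fin r, g (Sum.inr t) = 0 := fun t => by
      have := hgr t.rev; rwa [Fin.rev_rev] at this
    have hg' : (∑ t : Fin (m - r), g (Sum.inl t) • v (Sum.inl t)) = 0 := by
      have hz : (∑ t : Fin r, g (Sum.inr t) • v (Sum.inr t)) = 0 :=
        Finset.sum_eq_zero (fun t _ => by rw [hgr' t, zero_smul])
      rwa [hz, add_zero] at hg
    have hgl : ∀ t : Fin (m - r), g (Sum.inl t) = 0 := by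
      have : ((∑ t : Fin (m - r), g (Sum.inl t) • k t : LinearMap.ker f) : Fin m → F) = 0 := by
        push_cast; simpa [hvdef] using hg'
      have h4 : (∑ t : Fin (m - r), g (Sum.inl t) • k t : LinearMap.ker f) = 0 :=
        Subtype.coe_injective (by simpa using this)
      exact Fintype.linearIndependent_iff.mp k.linearIndependent _ h4
    intro i
    cases i with
    | inl t => exact hgl t
    | inr t => exact hgr' t
  haveI : Nonempty (Fin (m - r) ⊕ Fin r) := by
    rcases Nat.eq_zero_or_pos r with h | h
    · exact ⟨Sum.inl ⟨0, by omega⟩⟩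
    · exact ⟨Sum.inr ⟨0, h⟩⟩
  haveI : Nonempty (Fin r ⊕ Fin (p - r)) := by
    rcases Nat.eq_zero_or_pos r with h | h
    · exact ⟨Sum.inr ⟨0, by omega⟩⟩
    · exact ⟨Sum.inl ⟨0, h⟩⟩
  have cardv : Fintype.card (Fin (m - r) ⊕ Fin r) = finrank F (Fin m → F) := by
    simp [Module.finrank_pi]; omega
  have cardw : Fintype.card (Fin r ⊕ Fin (p - r)) = finrank F (Fin p → F) := by
    simp [Module.finrank_pi]; omega
  let b0 := basisOfLinearIndependentOfCardEqFinrank hv cardv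
  let c0 := basisOfLinearIndependentOfCardEqFinrank hw cardw
  let eb : (Fin (m - r) ⊕ Fin r) ≃ Fin m := finSumFinEquiv.trans (finCongr (by omega))
  let ec : (Fin r ⊕ Fin (p - r)) ≃ Fin p := finSumFinEquiv.trans (finCongr (by omega))
  have hb0 : ∀ s, b0 s = v s := fun s => by
    rw [coe_basisOfLinearIndependentOfCardEqFinrank]
  have hc0 : ∀ s, c0 s = w s := fun s => by
    rw [coe_basisOfLinearIndependentOfCardEqFinrank]
  have key : LinearMap.toMatrix (b0.reindex eb) (c0.reindex ec) f =
      Matrix.of (fun (i : Fin p) (j : Fin m) =>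
        if (i : ℕ) < r ∧ (j : ℕ) + (i : ℕ) + 1 = m then (1 : F) else 0) := by
    ext i j
    rw [LinearMap.toMatrix_apply]
    obtain ⟨s, rfl⟩ : ∃ s, eb s = j := ⟨eb.symm j, eb.apply_symm_apply j⟩
    have hbj : (b0.reindex eb) (eb s) = v s := by
      rw [Basis.reindex_apply, Equiv.symm_apply_apply, hb0]
    rw [hbj]
    cases s with
    | inl t =>
      have h0 : f (v (Sum.inl t)) = 0 := (k t).2
      rw [h0, map_zero]
      have hj : (eb (Sum.inl t) : ℕ) = (t : ℕ) := by
        simp [eb]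
      rw [Matrix.of_apply, if_neg]
      · simp
      · rintro ⟨hi1, hi2⟩
        have := t.isLt
        omega
    | inr t =>
      have h0 : f (v (Sum.inr t)) = c0 (Sum.inl t.rev) := by
        rw [hc0]
        exact hu t.rev
      rw [h0]
      rw [Basis.repr_reindex_apply, Basis.repr_self, Finsupp.single_apply]
      have hj : (eb (Sum.inr t) : ℕ) = (m - r) + (t : ℕ) := by
        simp [eb]
      have hrev : (ec (Sum.inl t.rev) : ℕ) = r - 1 - (t : ℕ) := by
        simp [ec, Fin.val_rev]
        omega
      have ht := t.isLt
      by_cases hcond : (i : ℕ) = r - 1 - (t : ℕ)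
      · rw [if_pos, Matrix.of_apply, if_pos]
        · constructor
          · omega
          · omega
        · rw [Equiv.eq_symm_apply]
          exact Fin.ext (by rw [hrev, hcond])
      · rw [if_neg, Matrix.of_apply, if_neg]
        · rintro ⟨hi1, hi2⟩
          omega
        · intro hEq
          rw [Equiv.eq_symm_apply] at hEq
          apply hcond
          rw [← hEq, hrev]
  have hY : LinearMap.toMatrix (Pi.basisFun F (Fin m)) (Pi.basisFun F (Fin p)) f = Y :=
    LinearMap.toMatrix'_toLin' Y
  have main : (c0.reindex ec).toMatrix (Pi.basisFun F (Fin p)) * Y *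
      (Pi.basisFun F (Fin m)).toMatrix (b0.reindex eb) =
      Matrix.of (fun (i : Fin p) (j : Fin m) =>
        if (i : ℕ) < r ∧ (j : ℕ) + (i : ℕ) + 1 = m then (1 : F) else 0) := by
    rw [← hY, basis_toMatrix_mul_linearMap_toMatrix_mul_basis_toMatrix, key]
  refine ⟨⟨(c0.reindex ec).toMatrix (Pi.basisFun F (Fin p)),
      (Pi.basisFun F (Fin p)).toMatrix (c0.reindex ec), ?_, ?_⟩,
    ⟨(Pi.basisFun F (Fin m)).toMatrix (b0.reindex eb),
      (b0.reindex eb).toMatrix (Pi.basisFun F (Fin m)), ?_, ?_⟩, main⟩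
  · exact Basis.toMatrix_mul_toMatrix_flip _ _
  · exact Basis.toMatrix_mul_toMatrix_flip _ _
  · exact Basis.toMatrix_mul_toMatrix_flip _ _
  · exact Basis.toMatrix_mul_toMatrix_flip _ _

/-- If `Y` is an `(n−m)×m` matrix over a field `F` of rank `r` with `2r < n`, then `Y`
can be brought to the normal form `Y_r(1)` (i.e. with scalar `d = 1`) by `Y ↦ C Y A⁻¹`
with `A ∈ GL_m(F)`, `C ∈ GL_{n−m}(F)` and `det A · det C = 1`. -/
theorem levi_normal_form_d_one (F : Type*) [Field F] (n m : ℕ)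
    (h1 : 1 ≤ m) (h2 : m ≤ n - 1) (hn : 2 ≤ n)
    (Y : Matrix (Fin (n - m)) (Fin m) F) (hr : 2 * Y.rank < n) :
    ∃ (A : Matrix.GeneralLinearGroup (Fin m) F)
      (C : Matrix.GeneralLinearGroup (Fin (n - m)) F),
      A.val.det * C.val.det = 1 ∧
      C.val * Y * (A⁻¹).val = Ymat F n m Y.rank 1 := by
  classical
  have hp : 1 ≤ n - m := by omega
  obtain ⟨P, Q, hPQ⟩ := exists_equiv_normal_form F (n - m) m h1 hp Y
  set r := Y.rank with hrdef
  have hrm : r ≤ m := by simpa using Y.rank_le_card_width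
  have hrp : r ≤ n - m := by simpa using Y.rank_le_card_height
  have hE : (Matrix.of (fun (i : Fin (n - m)) (j : Fin m) =>
      if (i : ℕ) < r ∧ (j : ℕ) + (i : ℕ) + 1 = m then (1 : F) else 0)) = Ymat F n m r 1 := by
    ext i j
    simp only [Matrix.of_apply, Ymat, ite_self]
  rw [hE] at hPQ
  have hq : (Q : Matrix (Fin m) (Fin m) F).det ≠ 0 :=
    ((Matrix.isUnit_iff_isUnit_det _).mp Q.isUnit).ne_zero
  have hpp : (P : Matrix (Fin (n - m)) (Fin (n - m)) F).det ≠ 0 :=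
    ((Matrix.isUnit_iff_isUnit_det _).mp P.isUnit).ne_zero
  set δ : F := ((Q : Matrix (Fin m) (Fin m) F).det)⁻¹ * (P : Matrix (Fin (n - m)) (Fin (n - m)) F).det with hδdef
  have hδ : δ ≠ 0 := mul_ne_zero (inv_ne_zero hq) hpp
  by_cases hcase : r < n - m
  · -- scale a late row of C
    set i0 : Fin (n - m) := ⟨n - m - 1, by omega⟩ with hi0
    set D : Matrix (Fin (n - m)) (Fin (n - m)) F :=
      Matrix.diagonal (fun i => if i = i0 then δ⁻¹ else 1) with hD
    have hdetD : D.det = δ⁻¹ := by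
      rw [hD, Matrix.det_diagonal]
      simp [Finset.prod_ite_eq']
    have hDunit : IsUnit D.det := by
      rw [hdetD]; exact (isUnit_iff_ne_zero).mpr (inv_ne_zero hδ)
    set Du : (Matrix (Fin (n - m)) (Fin (n - m)) F)ˣ := D.nonsingInvUnit hDunit with hDu
    have hDuval : (Du : Matrix (Fin (n - m)) (Fin (n - m)) F) = D := rfl
    refine ⟨Q⁻¹, Du * P, ?_, ?_⟩
    · rw [Units.val_mul, Matrix.det_mul, det_val_inv_unit, hDuval, hdetD, hδdef]
      field_simp
    · rw [inv_inv, Units.val_mul, hDuval]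
      rw [Matrix.mul_assoc D _ Y, Matrix.mul_assoc D _ _, hPQ]
      ext i j
      rw [hD, Matrix.diagonal_mul]
      by_cases hi : i = i0
      · have : Ymat F n m r 1 i j = 0 := by
          rw [Ymat, if_neg]
          rintro ⟨ha, hb⟩
          rw [hi] at ha
          simp only [hi0] at ha
          omega
        rw [this, mul_zero]
      · rw [if_neg hi, one_mul]
  · -- r = n - m, so r < m; scale first column
    have hrm' : r < m := by omega
    set j0 : Fin m := ⟨0, by omega⟩ with hj0
    set D : Matrix (Fin m) (Fin m) F :=
      Matrix.diagonal (fun j => if j = j0 then δ else 1) with hD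
    have hdetD : D.det = δ := by
      rw [hD, Matrix.det_diagonal]
      simp [Finset.prod_ite_eq']
    have hDunit : IsUnit D.det := by
      rw [hdetD]; exact (isUnit_iff_ne_zero).mpr hδ
    set Du : (Matrix (Fin m) (Fin m) F)ˣ := D.nonsingInvUnit hDunit with hDu
    have hDuval : (Du : Matrix (Fin m) (Fin m) F) = D := rfl
    refine ⟨(Q * Du)⁻¹, P, ?_, ?_⟩
    · rw [det_val_inv_unit, Units.val_mul, Matrix.det_mul, hDuval, hdetD, hδdef]
      field_simp
    · rw [inv_inv, Units.val_mul, hDuval, ← Matrix.mul_assoc, hPQ]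
      ext i j
      rw [hD, Matrix.mul_diagonal]
      by_cases hj : j = j0
      · have : Ymat F n m r 1 i j = 0 := by
          rw [Ymat, if_neg]
          rintro ⟨ha, hb⟩
          rw [hj] at hb
          simp only [hj0] at hb
          omega
        rw [this, zero_mul]
      · rw [if_neg hj, mul_one]
end

section
/- Let F be a field, n ≥ 2, 1 ≤ m ≤ n−1, and let r be an integer with 1 ≤ r ≤ min(m, n−m) and 2r < n, and let d ∈ F^×. Let y(Y_r(d)) denote the n×n block matrix [[0_m, 0],[Y_r(d), 0_{n−m}]]. Then y(Y_r(d)) is SL_n(F)-conjugate to the standard nilpotent representative J_{[2^r 1^{n−2r}]} of the partition [2^r 1^{n−2r}]: there exists g ∈ SL_n(F) with g · y(Y_r(d)) · g^{-1} = J_{[2^r 1^{n−2r}]}. (Since 2r < n, the last row of J_{[2^r 1^{n−2r}]} is zero, so D(d)J_{[2^r 1^{n−2r}]} = J_{[2^r 1^{n−2r}]} and the representative is independent of d.) -/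
/-- The `n×n` block matrix `y(Y) = [[0_m, 0], [Y, 0_{n−m}]]` attached to an
`(n−m)×m` matrix `Y`. -/
def yY (F : Type*) [Field F] (n m : ℕ) (Y : Matrix (Fin (n - m)) (Fin m) F) :
    Matrix (Fin n) (Fin n) F :=
  fun i j =>
    if h : m ≤ (i : ℕ) ∧ (j : ℕ) < m then
      Y ⟨(i : ℕ) - m, by have := i.isLt; omega⟩ ⟨(j : ℕ), h.2⟩
    else 0

/-! Listing the basis as `e_m, e_{m+1}, e_{m-1}, e_{m+2}, …, e_{m+1-r}, e_{m+r}` followed by the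
remaining vectors turns `y(Y_r(d))` into `J_{[2^r 1^{n-2r}]}` up to the entry `d`, which rescaling
one basis vector removes. This gives conjugacy under `GL_n(F)`. Since `2r < n`, the last row and column of
`J_{[2^r 1^{n-2r}]}` vanish, so rescaling the last basis vector commutes with it, and such a
rescaling brings the determinant of the conjugating matrix to `1`. -/
namespace Matrix

variable {n R F : Type*} [Fintype n] [DecidableEq n]

theorem isConj_submatrix_self [CommRing R] (A : Matrix n n R) (σ : Equiv.Perm n) :
    IsConj A (A.submatrix σ σ) := by
  obtain ⟨P, hP⟩ : IsUnit (σ.permMatrix R) := by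
    rw [isUnit_iff_isUnit_det, det_permutation]
    exact (Equiv.Perm.sign σ).isUnit.map (Int.castRingHom R)
  refine ⟨P, ?_⟩
  rw [SemiconjBy, hP, PEquiv.toMatrix_toPEquiv_mul, PEquiv.mul_toMatrix_toPEquiv,
    submatrix_submatrix]
  simp

theorem isConj_diagonal_scaling [Field F] (A : Matrix n n F) {t : n → F} (ht : ∀ i, t i ≠ 0) :
    IsConj A (of fun i j => t i * A i j / t j) := by
  obtain ⟨D, hD⟩ : IsUnit (diagonal t) := isUnit_diagonal.2 (Pi.isUnit_iff.2 fun i => (ht i).isUnit)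
  refine ⟨D, ?_⟩
  rw [SemiconjBy, hD]
  ext i j
  rw [diagonal_mul, mul_diagonal, of_apply, div_mul_cancel₀ _ (ht j)]

theorem exists_specialLinearGroup_conj_of_isConj [Field F] {A B : Matrix n n F} (h : IsConj A B)
    (k : n) (hrow : ∀ j, B k j = 0) (hcol : ∀ i, B i k = 0) :
    ∃ g : SpecialLinearGroup n F, g.val * A * (g⁻¹).val = B := by
  obtain ⟨c, hc⟩ := h
  have hdet : (c : Matrix n n F).det ≠ 0 := ((isUnit_iff_isUnit_det _).1 c.isUnit).ne_zero
  set D := diagonal (Function.update 1 k (c : Matrix n n F).det⁻¹)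
  have hDB : D * B = B * D := by
    ext i j
    rw [diagonal_mul, mul_diagonal]
    by_cases hi : i = k
    · subst hi; simp [hrow]
    by_cases hj : j = k
    · subst hj; simp [hcol]
    simp [Function.update_of_ne hi, Function.update_of_ne hj]
  let g : SpecialLinearGroup n F := ⟨D * c, by
    rw [det_mul, det_diagonal, Finset.prod_update_of_mem (Finset.mem_univ k)]
    simp [hdet]⟩
  refine ⟨g, ?_⟩
  have hgA : g.val * A = B * g.val := by
    change D * c * A = B * (D * c)
    rw [mul_assoc, hc.eq, ← mul_assoc, hDB, mul_assoc]
  rw [hgA, mul_assoc, ← SpecialLinearGroup.coe_mul, mul_inv_cancel, SpecialLinearGroup.coe_one,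
    mul_one]

end Matrix

theorem mem_scanl_replicate_one (s b a : ℕ) :
    a ∈ (List.replicate s 1).scanl (· + ·) b ↔ b ≤ a ∧ a ≤ b + s := by
  induction s generalizing b with
  | zero => simp; omega
  | succ s ih =>
    rw [List.replicate_succ, List.scanl_cons, List.mem_cons, ih]
    omega

theorem mem_scanl_replicate_two_append_one (r s b a : ℕ) :
    a ∈ (List.replicate r 2 ++ List.replicate s 1).scanl (· + ·) b ↔
      (a % 2 = b % 2 ∧ b ≤ a ∧ a ≤ b + 2 * r) ∨ (b + 2 * r ≤ a ∧ a ≤ b + 2 * r + s) := by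
  induction r generalizing b with
  | zero => simp [mem_scanl_replicate_one]; omega
  | succ r ih =>
    rw [List.replicate_succ, List.cons_append, List.scanl_cons, List.mem_cons, ih]
    omega

theorem Jmat_replicate_two_append_one_apply (F : Type*) [Field F] (n r : ℕ) (i j : Fin n) :
    Jmat F n (List.replicate r 2 ++ List.replicate (n - 2 * r) 1) i j =
      if (i : ℕ) = j + 1 ∧ (j : ℕ) % 2 = 0 ∧ (j : ℕ) + 1 < 2 * r then 1 else 0 := by
  have := j.isLt
  simp only [Jmat, mem_scanl_replicate_two_append_one]
  congr 1
  apply propext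
  omega

theorem yY_Ymat_apply (F : Type*) [Field F] (n m r : ℕ) (d : F) (i j : Fin n) :
    yY F n m (Ymat F n m r d) i j =
      if m ≤ (i : ℕ) ∧ (i : ℕ) - m < r ∧ (j : ℕ) + ((i : ℕ) - m) + 1 = m then
        (if (i : ℕ) - m = r - 1 then d else 1) else 0 := by
  simp only [yY, Ymat]
  split_ifs <;> first | rfl | omega

-- Indices are `0`-based: `2k, 2k+1 ↦ m-1-k, m+k` is the pair `e_{m-k}, e_{m+1+k}` of the header.
def pairingIndex (m r i : ℕ) : ℕ :=
  if i < 2 * r then (if i % 2 = 0 then m - 1 - i / 2 else m + i / 2)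
  else if i < m + r then i - 2 * r else i

noncomputable def pairingPerm (n m r : ℕ) (hrm : r ≤ m) (hmn : m + r ≤ n) : Equiv.Perm (Fin n) :=
  Equiv.ofBijective (fun i => ⟨pairingIndex m r i, by unfold pairingIndex; split_ifs <;> omega⟩)
    (Finite.injective_iff_bijective.1 fun a b hab => by
      have := congrArg Fin.val hab
      simp only [pairingIndex] at this
      ext; split_ifs at this <;> omega)

theorem pairingPerm_apply_val {n m r : ℕ} (hrm : r ≤ m) (hmn : m + r ≤ n) (i : Fin n) :
    (pairingPerm n m r hrm hmn i : ℕ) = pairingIndex m r i := rfl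

def pairingScale {F : Type*} [Field F] (n r : ℕ) (d : F) (i : Fin n) : F :=
  if (i : ℕ) = 2 * r - 1 then d⁻¹ else 1

theorem pairingScale_ne_zero {F : Type*} [Field F] (n r : ℕ) {d : F} (hd : d ≠ 0) (i : Fin n) :
    pairingScale n r d i ≠ 0 := by
  unfold pairingScale
  split_ifs <;> simp [hd]

theorem Jmat_eq_scaling_submatrix_yY (F : Type*) [Field F] (n m r : ℕ) (hrm : r ≤ m)
    (hmn : m + r ≤ n) {d : F} (hd : d ≠ 0) :
    Jmat F n (List.replicate r 2 ++ List.replicate (n - 2 * r) 1) =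
      Matrix.of fun i j =>
        pairingScale n r d i *
          (yY F n m (Ymat F n m r d)).submatrix (pairingPerm n m r hrm hmn)
            (pairingPerm n m r hrm hmn) i j / pairingScale n r d j := by
  ext i j
  rw [Jmat_replicate_two_append_one_apply, Matrix.of_apply, Matrix.submatrix_apply, yY_Ymat_apply,
    pairingPerm_apply_val, pairingPerm_apply_val]
  unfold pairingIndex pairingScale
  split_ifs <;> first | (exfalso; omega) | simp [hd]

theorem yY_conj_J_general (F : Type*) [Field F] (n m r : ℕ)
    (h2 : m ≤ n - 1)
    (hrm : r ≤ m) (hrnm : r ≤ n - m) (hrn : 2 * r < n)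
    (d : F) (hd : d ≠ 0) :
    ∃ g : Matrix.SpecialLinearGroup (Fin n) F,
      g.val * yY F n m (Ymat F n m r d) * (g⁻¹).val
        = Jmat F n (List.replicate r 2 ++ List.replicate (n - 2 * r) 1) := by
  have hmn : m + r ≤ n := by omega
  have hconj := (Matrix.isConj_submatrix_self (yY F n m (Ymat F n m r d))
    (pairingPerm n m r hrm hmn)).trans
      (Matrix.isConj_diagonal_scaling _ (pairingScale_ne_zero n r hd))
  rw [← Jmat_eq_scaling_submatrix_yY F n m r hrm hmn hd] at hconj
  obtain ⟨k, hk⟩ : ∃ k : Fin n, (k : ℕ) = n - 1 := ⟨⟨n - 1, by omega⟩, rfl⟩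
  refine Matrix.exists_specialLinearGroup_conj_of_isConj hconj k (fun j => ?_) (fun i => ?_) <;>
  · rw [Jmat_replicate_two_append_one_apply, if_neg]
    omega

/-- For `1 ≤ r ≤ min(m, n−m)` with `2r < n` and `d ∈ F^×`, the block matrix
`y(Y_r(d)) = [[0_m, 0],[Y_r(d), 0_{n−m}]]` is `SL_n(F)`-conjugate to the standard
nilpotent representative `J_{[2^r 1^{n−2r}]}` of the partition `[2^r 1^{n−2r}]`. -/
theorem yY_conj_J (F : Type*) [Field F] (n m r : ℕ)
    (h1 : 1 ≤ m) (h2 : m ≤ n - 1)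
    (hr1 : 1 ≤ r) (hrm : r ≤ m) (hrnm : r ≤ n - m) (hrn : 2 * r < n)
    (d : F) (hd : d ≠ 0) :
    ∃ g : Matrix.SpecialLinearGroup (Fin n) F,
      g.val * yY F n m (Ymat F n m r d) * (g⁻¹).val
        = Jmat F n (List.replicate r 2 ++ List.replicate (n - 2 * r) 1) :=
  yY_conj_J_general F n m r h2 hrm hrnm hrn d hd
end

section
/- Let F be a field and k ≥ 1. For each integer a with 0 ≤ a ≤ k−1 and each v ∈ F^{k−a−1}, let M(a, v) be the k×k matrix over F given in block form (row blocks of sizes 1, a, k−a−1; column blocks of sizes a, 1, k−a−1) by M(a, v) = [[0, 0, 0],[I_a, 0, 0],[0, v, I_{k−a−1}]], i.e. the first row is zero, rows 2 through a+1 form (I_a 0 0), and rows a+2 through k form (0 v I_{k−a−1}). Then the matrices M(a, v) form a complete and irredundant set of representatives for the orbits of GL_k(F) acting by left multiplication on the set S_k(F) of k×k matrices over F with one-dimensional kernel (equivalently, rank k−1): for every m ∈ S_k(F) there exist h ∈ GL_k(F), a unique a ∈ {0, …, k−1}, and a unique v ∈ F^{k−a−1} such that h·m = M(a, v). -/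
/-!
Left multiplication by an invertible matrix does not change the kernel, and conversely two
matrices with the same kernel differ by an invertible left factor (both induce isomorphisms
from `F^k ⧸ ker` onto their ranges, and the resulting isomorphism between the ranges extends
to `F^k`). So the orbit of `m` only depends on the line `ker m`. The kernel of `M(a, v)` is
spanned by the vector that vanishes before position `a`, is `1` at `a` and `-v` after it, and
every line of `F^k` is spanned by exactly one such vector: `a` is the position of the first
nonzero coordinate, and normalising that coordinate to `1` determines `v`.
-/

/-- The representative matrix `M(a, v)` for `0 ≤ a ≤ k−1` and `v ∈ F^{k−a−1}`:
in block form (row blocks of sizes `1, a, k−a−1`; column blocks of sizes `a, 1, k−a−1`)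
it is `[[0, 0, 0], [I_a, 0, 0], [0, v, I_{k−a−1}]]`. -/
def Mrep (F : Type*) [Field F] (k a : ℕ) (v : Fin (k - a - 1) → F) :
    Matrix (Fin k) (Fin k) F :=
  fun i j =>
    if hi : (i : ℕ) ≤ a then
      -- first row is zero; rows 2,…,a+1 form (I_a 0 0)
      (if (i : ℕ) = 0 then 0 else if (j : ℕ) + 1 = (i : ℕ) then 1 else 0)
    else
      -- rows a+2,…,k form (0 v I_{k−a−1})
      if (j : ℕ) = a then v ⟨(i : ℕ) - a - 1, by have := i.isLt; omega⟩
      else if (j : ℕ) = (i : ℕ) then 1 else 0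

open Module Matrix

theorem Submodule.exists_linearEquiv_extend {F V : Type*} [Field F] [AddCommGroup V]
    [Module F V] [FiniteDimensional F V] {p q : Submodule F V} (e₀ : p ≃ₗ[F] q) :
    ∃ e : V ≃ₗ[F] V, ∀ z : p, e z = e₀ z := by
  obtain ⟨p', hp⟩ := p.exists_isCompl
  obtain ⟨q', hq⟩ := q.exists_isCompl
  have hfinrank : finrank F p' = finrank F q' := by
    have := e₀.finrank_eq
    have := Submodule.finrank_add_eq_of_isCompl hp
    have := Submodule.finrank_add_eq_of_isCompl hq
    omega
  refine ⟨(p.prodEquivOfIsCompl p' hp).symm ≪≫ₗ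
    e₀.prodCongr (.ofFinrankEq _ _ hfinrank) ≪≫ₗ q.prodEquivOfIsCompl q' hq, fun z => ?_⟩
  simp

theorem LinearMap.exists_linearEquiv_comp_eq_of_ker_eq {F V W : Type*} [Field F]
    [AddCommGroup V] [Module F V] [AddCommGroup W] [Module F W] [FiniteDimensional F W]
    (f g : V →ₗ[F] W) (h : ker f = ker g) :
    ∃ e : W ≃ₗ[F] W, e.toLinearMap ∘ₗ g = f := by
  obtain ⟨e, he⟩ := Submodule.exists_linearEquiv_extend
    (g.quotKerEquivRange.symm ≪≫ₗ Submodule.quotEquivOfEq _ _ h.symm ≪≫ₗ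
      f.quotKerEquivRange)
  refine ⟨e, LinearMap.ext fun y => ?_⟩
  simpa using he ⟨g y, mem_range_self g y⟩

theorem Matrix.exists_GL_mul_eq_of_ker_eq {n F : Type*} [Fintype n] [DecidableEq n] [Field F]
    (A B : Matrix n n F) (h : LinearMap.ker B.mulVecLin = LinearMap.ker A.mulVecLin) :
    ∃ g : GL n F, g.val * A = B := by
  obtain ⟨e, he⟩ := LinearMap.exists_linearEquiv_comp_eq_of_ker_eq _ _ h
  set g := GeneralLinearGroup.toLin.symm
    ((LinearMap.GeneralLinearGroup.generalLinearEquiv F _).symm e)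
  have hg : g.val.mulVecLin = e := by
    rw [← GeneralLinearGroup.coe_toLin, MulEquiv.apply_symm_apply,
      ← LinearMap.GeneralLinearGroup.generalLinearEquiv_to_linearMap, MulEquiv.apply_symm_apply]
  refine ⟨g, toLin'.injective ?_⟩
  change (g.val * A).mulVecLin = B.mulVecLin
  rw [mulVecLin_mul, hg, he]

theorem Matrix.finrank_ker_mulVecLin_eq_one {n F : Type*} [Fintype n] [Field F]
    {A : Matrix n n F} (hn : 1 ≤ Fintype.card n) (hA : A.rank = Fintype.card n - 1) :
    finrank F (LinearMap.ker A.mulVecLin) = 1 := by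
  have := LinearMap.finrank_range_add_finrank_ker A.mulVecLin
  rw [finrank_fintype_fun_eq_card] at this
  change A.rank + _ = _ at this
  omega

namespace Mrep

variable {F : Type*} [Field F] {k a : ℕ}

theorem mulVec_apply_of_eq_zero (v : Fin (k - a - 1) → F) (y : Fin k → F) (i : Fin k)
    (hi : (i : ℕ) = 0) : (Mrep F k a v *ᵥ y) i = 0 := by
  simp [mulVec, dotProduct, Mrep, hi]

theorem mulVec_apply_of_ne_zero_of_le (v : Fin (k - a - 1) → F) (y : Fin k → F) (i : Fin k)
    (hi0 : (i : ℕ) ≠ 0) (hi : (i : ℕ) ≤ a) :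
    (Mrep F k a v *ᵥ y) i = y ⟨i - 1, by omega⟩ := by
  rw [mulVec, dotProduct, Finset.sum_eq_single ⟨i - 1, by omega⟩]
  · simp [Mrep, hi, hi0, show (i : ℕ) - 1 + 1 = i by omega]
  · intro j _ hj
    simp only [Mrep, hi, hi0, dite_true, if_false, ne_eq, Fin.ext_iff] at hj ⊢
    rw [if_neg (by omega), zero_mul]
  · simp

theorem mulVec_apply_of_lt (ha : a < k) (v : Fin (k - a - 1) → F) (y : Fin k → F) (i : Fin k)
    (hi : a < (i : ℕ)) :
    (Mrep F k a v *ᵥ y) i = v ⟨i - a - 1, by omega⟩ * y ⟨a, ha⟩ + y i := by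
  have hrow : (fun j => Mrep F k a v i j) =
      Pi.single ⟨a, ha⟩ (v ⟨i - a - 1, by omega⟩) + Pi.single i 1 := by
    funext j
    simp only [Mrep, Pi.add_apply, Pi.single_apply, Fin.ext_iff]
    split_ifs <;> first | omega | simp_all
  rw [mulVec, hrow, add_dotProduct, single_dotProduct, single_dotProduct, one_mul]

variable (k a) in
def kerVec (v : Fin (k - a - 1) → F) : Fin k → F := fun i =>
  if hlt : (i : ℕ) < a then 0 else if heq : (i : ℕ) = a then 1 else -v ⟨i - a - 1, by omega⟩

theorem kerVec_apply_of_lt (v : Fin (k - a - 1) → F) {i : Fin k} (hi : (i : ℕ) < a) :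
    kerVec k a v i = 0 :=
  dif_pos hi

theorem kerVec_apply_self (ha : a < k) (v : Fin (k - a - 1) → F) :
    kerVec k a v ⟨a, ha⟩ = 1 := by
  simp [kerVec]

theorem kerVec_apply_of_gt (v : Fin (k - a - 1) → F) {i : Fin k} (hi : a < (i : ℕ)) :
    kerVec k a v i = -v ⟨i - a - 1, by omega⟩ := by
  simp [kerVec, hi.not_gt, hi.ne']

theorem kerVec_ne_zero (ha : a < k) (v : Fin (k - a - 1) → F) : kerVec k a v ≠ 0 :=
  fun h => by simpa [kerVec_apply_self ha] using congrFun h ⟨a, ha⟩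

theorem kerVec_injective : Function.Injective (kerVec (F := F) k a) := by
  intro v v' h
  funext i
  have := congrFun h ⟨a + 1 + i, by omega⟩
  have hi : a < a + 1 + (i : ℕ) := by omega
  rw [kerVec_apply_of_gt v hi, kerVec_apply_of_gt v' hi, neg_inj] at this
  convert this using 2 <;> ext <;> simp only <;> omega

theorem mulVec_kerVec (ha : a < k) (v : Fin (k - a - 1) → F) :
    Mrep F k a v *ᵥ kerVec k a v = 0 := by
  funext i
  rcases Nat.eq_zero_or_pos i with hi0 | hi0
  · exact mulVec_apply_of_eq_zero v _ i hi0
  rcases le_or_gt (i : ℕ) a with hi | hi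
  · rw [mulVec_apply_of_ne_zero_of_le v _ i hi0.ne' hi,
      kerVec_apply_of_lt v (show (i : ℕ) - 1 < a by omega), Pi.zero_apply]
  · rw [mulVec_apply_of_lt ha v _ i hi, kerVec_apply_self, kerVec_apply_of_gt v hi, mul_one,
      add_neg_cancel, Pi.zero_apply]

theorem eq_smul_kerVec_of_mulVec_eq_zero (ha : a < k) (v : Fin (k - a - 1) → F)
    {y : Fin k → F} (hy : Mrep F k a v *ᵥ y = 0) : y = y ⟨a, ha⟩ • kerVec k a v := by
  funext i
  rw [Pi.smul_apply, smul_eq_mul]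
  rcases lt_trichotomy (i : ℕ) a with hi | hi | hi
  · have := mulVec_apply_of_ne_zero_of_le v y ⟨i + 1, by omega⟩ (by simp) hi
    rw [hy, Pi.zero_apply] at this
    rw [kerVec_apply_of_lt v hi, mul_zero]
    exact this.symm
  · obtain rfl : i = ⟨a, ha⟩ := Fin.ext hi
    rw [kerVec_apply_self, mul_one]
  · have := mulVec_apply_of_lt ha v y i hi
    rw [hy, Pi.zero_apply] at this
    rw [kerVec_apply_of_gt v hi]
    linear_combination -this

theorem ker_mulVecLin (ha : a < k) (v : Fin (k - a - 1) → F) :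
    LinearMap.ker (Mrep F k a v).mulVecLin = Submodule.span F {kerVec k a v} := by
  ext y
  rw [LinearMap.mem_ker, mulVecLin_apply, Submodule.mem_span_singleton]
  constructor
  · exact fun hy => ⟨y ⟨a, ha⟩, (eq_smul_kerVec_of_mulVec_eq_zero ha v hy).symm⟩
  · rintro ⟨c, rfl⟩
    rw [mulVec_smul, mulVec_kerVec ha, smul_zero]

theorem eq_of_mulVec_kerVec_eq_zero {a' : ℕ} (ha : a < k) (ha' : a' < k)
    (v : Fin (k - a - 1) → F) (v' : Fin (k - a' - 1) → F)
    (h : Mrep F k a' v' *ᵥ kerVec k a v = 0) : a' = a ∧ HEq v' v := by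
  have hx := eq_smul_kerVec_of_mulVec_eq_zero ha' v' h
  obtain rfl : a' = a := by
    by_contra hne
    rcases lt_or_gt_of_ne hne with hlt | hlt
    · rw [kerVec_apply_of_lt v (i := ⟨a', ha'⟩) hlt, zero_smul] at hx
      simpa [kerVec_apply_self] using congrFun hx ⟨a, ha⟩
    · simpa [kerVec_apply_self, kerVec_apply_of_lt v' (i := ⟨a, ha⟩) hlt]
        using congrFun hx ⟨a, ha⟩
  rw [kerVec_apply_self, one_smul] at hx
  exact ⟨rfl, heq_of_eq (kerVec_injective hx.symm)⟩

theorem exists_kerVec_mem_span_singleton {x : Fin k → F} (hx : x ≠ 0) :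
    ∃ a < k, ∃ v : Fin (k - a - 1) → F, kerVec k a v ∈ Submodule.span F {x} := by
  obtain ⟨i, hi, hmin⟩ := wellFounded_lt.has_min {i : Fin k | x i ≠ 0} (Function.ne_iff.mp hx)
  refine ⟨i, i.isLt, fun j => -(x i)⁻¹ * x ⟨i + 1 + j, by omega⟩,
    Submodule.mem_span_singleton.mpr ⟨(x i)⁻¹, ?_⟩⟩
  funext j
  rw [Pi.smul_apply, smul_eq_mul]
  rcases lt_trichotomy (j : ℕ) i with hj | hj | hj
  · have hxj : x j = 0 := not_not.mp fun hxj => hmin j hxj hj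
    rw [kerVec_apply_of_lt _ hj, hxj, mul_zero]
  · obtain rfl : j = i := Fin.ext hj
    rw [kerVec_apply_self, inv_mul_cancel₀ hi]
  · rw [kerVec_apply_of_gt _ hj, neg_mul, neg_neg]
    congr 2
    ext
    simp only
    omega

end Mrep

/-- The matrices `M(a, v)` form a complete and irredundant set of representatives for
the orbits of `GL_k(F)` acting by left multiplication on the set of `k×k` matrices of
rank `k − 1` (one-dimensional kernel): every such `m` satisfies `h·m = M(a, v)` for some
`h ∈ GL_k(F)` and a unique pair `(a, v)`. -/
theorem GL_left_orbit_reps (F : Type*) [Field F] (k : ℕ) (hk : 1 ≤ k)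
    (m : Matrix (Fin k) (Fin k) F) (hm : m.rank = k - 1) :
    ∃ (h : Matrix.GeneralLinearGroup (Fin k) F) (a : ℕ) (ha : a < k)
      (v : Fin (k - a - 1) → F),
      h.val * m = Mrep F k a v ∧
      ∀ (h' : Matrix.GeneralLinearGroup (Fin k) F) (a' : ℕ) (ha' : a' < k)
        (v' : Fin (k - a' - 1) → F),
          h'.val * m = Mrep F k a' v' → a' = a ∧ HEq v' v := by
  have hker : finrank F (LinearMap.ker m.mulVecLin) = 1 :=
    finrank_ker_mulVecLin_eq_one (by simpa using hk) (by simpa using hm)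
  obtain ⟨x, hxm, hx⟩ := Submodule.exists_mem_ne_zero_of_ne_bot (p := LinearMap.ker m.mulVecLin)
    fun h => by rw [h, finrank_bot] at hker; exact zero_ne_one hker
  obtain ⟨a, ha, v, hv⟩ := Mrep.exists_kerVec_mem_span_singleton hx
  have hmem : Mrep.kerVec k a v ∈ LinearMap.ker m.mulVecLin :=
    (Submodule.span_singleton_le_iff_mem x _).mpr hxm hv
  have hkerM : LinearMap.ker (Mrep F k a v).mulVecLin = LinearMap.ker m.mulVecLin := by
    rw [Mrep.ker_mulVecLin ha]
    refine Submodule.eq_of_le_of_finrank_eq ((Submodule.span_singleton_le_iff_mem _ _).mpr hmem) ?_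
    rw [hker, finrank_span_singleton (Mrep.kerVec_ne_zero ha v)]
  obtain ⟨h, hh⟩ := exists_GL_mul_eq_of_ker_eq m (Mrep F k a v) hkerM
  refine ⟨h, a, ha, v, hh, fun h' a' ha' v' hh' =>
    Mrep.eq_of_mulVec_kerVec_eq_zero ha ha' v v' ?_⟩
  rw [← hh', ← mulVec_mulVec, show m *ᵥ _ = 0 from hmem, mulVec_zero]
end

section
/- Let F be a field and k ≥ 2. Let P ≤ SL_k(F) be the subgroup of all matrices of block form [[1, ξᵀ],[0, h]] with h ∈ SL_{k−1}(F) and ξ ∈ F^{k−1} (this is the stabilizer of the first standard basis column vector under the action g ↦ g^{-1}·e_1). Then every left coset of P in SL_k(F) contains a representative of one of the following forms: for every G ∈ SL_k(F) there exists M ∈ P such that M·G equals either (i) the block matrix [[x^{-1}, 0, 0],[y, x, 0],[v, 0, I_{k−2}]] (row and column blocks of sizes 1, 1, k−2) for some x ∈ F^×, y ∈ F and column vector v ∈ F^{k−2}, or (ii) for some integer a with 0 ≤ a ≤ k−2, the block matrix [[0, 0, (−1)^{a+1} x^{-1}, 0],[x, 0, 0, 0],[0, I_a, 0, 0],[0,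 0, v, I_{k−a−2}]] (row blocks of sizes 1, 1, a, k−a−2; column blocks of sizes 1, a, 1, k−a−2) for some x ∈ F^× and column vector v ∈ F^{k−a−2}. -/
/-- Representative of type (i): the block matrix
`[[x⁻¹, 0, 0], [y, x, 0], [v, 0, I_{k−2}]]` (row and column blocks of sizes `1, 1, k−2`). -/
def RepA (F : Type*) [Field F] (k : ℕ) (x y : F) (v : Fin (k - 2) → F) :
    Matrix (Fin k) (Fin k) F :=
  fun i j =>
    if hi0 : (i : ℕ) = 0 then (if (j : ℕ) = 0 then x⁻¹ else 0)
    else if hi1 : (i : ℕ) = 1 then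
      (if (j : ℕ) = 0 then y else if (j : ℕ) = 1 then x else 0)
    else
      if (j : ℕ) = 0 then v ⟨(i : ℕ) - 2, by have := i.isLt; omega⟩
      else if (j : ℕ) = (i : ℕ) then 1 else 0

/-- Representative of type (ii): the block matrix
`[[0, 0, (−1)^{a+1} x⁻¹, 0], [x, 0, 0, 0], [0, I_a, 0, 0], [0, 0, v, I_{k−a−2}]]`
(row blocks of sizes `1, 1, a, k−a−2`; column blocks of sizes `1, a, 1, k−a−2`). -/
def RepB (F : Type*) [Field F] (k a : ℕ) (x : F) (v : Fin (k - a - 2) → F) :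
    Matrix (Fin k) (Fin k) F :=
  fun i j =>
    if hi0 : (i : ℕ) = 0 then (if (j : ℕ) = a + 1 then (-1) ^ (a + 1) * x⁻¹ else 0)
    else if hi1 : (i : ℕ) = 1 then (if (j : ℕ) = 0 then x else 0)
    else if hia : (i : ℕ) ≤ a + 1 then (if (j : ℕ) + 1 = (i : ℕ) then 1 else 0)
    else
      if (j : ℕ) = a + 1 then v ⟨(i : ℕ) - a - 2, by have := i.isLt; omega⟩
      else if (j : ℕ) = (i : ℕ) then 1 else 0

/-!
Write `w := G⁻¹ e₁`, which is nonzero. For `M := R G⁻¹` we have `M G = R`, and `M` lies in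
`P` exactly when its first column `R w` is `e₁`. So it suffices to find, for every nonzero `w`, a
representative `R` of determinant one with `R w = e₁`: if `w₀ ≠ 0` a type (i) matrix with
`x = w₀` does it, otherwise a type (ii) matrix with `a + 1` the index of the first nonzero
entry of `w`. A type (i) matrix is lower triangular, and permuting the rows of a type (ii)
matrix by the cycle `(0 1 ⋯ a+1)`, of sign `(-1)^(a+1)`, makes it one; in both cases all
off-diagonal entries lie in a single column, which makes determinants and products with `w`
easy to read off.
-/

open Matrix

theorem Equiv.Perm.exists_ne_apply_ne_of_ne_one {α : Type*} {σ : Equiv.Perm α} (hσ : σ ≠ 1)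
    (p : α) : ∃ i, i ≠ p ∧ σ i ≠ i := by
  obtain ⟨i, hi⟩ := not_forall.mp (mt Equiv.Perm.ext hσ)
  by_cases hσp : σ p = p
  · exact ⟨i, fun h => hi (h ▸ hσp), hi⟩
  · refine ⟨σ⁻¹ p, fun h => hσp ?_, fun h => hσp ?_⟩
    · exact Equiv.Perm.eq_inv_iff_eq.mp h.symm
    · exact Equiv.Perm.eq_inv_iff_eq.mp (by simpa using h : p = σ⁻¹ p)

theorem Fin.val_cycleRange_apply {m : ℕ} (i j : Fin m) :
    (Fin.cycleRange j i : ℕ) =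
      if (i : ℕ) < j then (i : ℕ) + 1 else if (i : ℕ) = j then 0 else i := by
  rcases lt_or_ge j i with h | h
  · rw [Fin.cycleRange_of_gt h, if_neg (by omega), if_neg (Fin.val_ne_of_ne h.ne')]
  · rw [Fin.coe_cycleRange_of_le h]
    split_ifs <;> first | rfl | omega

namespace Matrix

variable {n R : Type*} [Fintype n]

def OffDiagInCol (M : Matrix n n R) (p : n) [Zero R] : Prop :=
  ∀ i j, j ≠ i → j ≠ p → M i j = 0

variable {M : Matrix n n R} {p : n}

theorem OffDiagInCol.mulVec_apply_of_ne [NonUnitalNonAssocSemiring R] (hM : M.OffDiagInCol p)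
    (w : n → R) {i : n} (hi : i ≠ p) : (M *ᵥ w) i = M i p * w p + M i i * w i :=
  Fintype.sum_eq_add p i hi.symm fun j hj => mul_eq_zero_of_left (hM i j hj.2 hj.1) _

theorem OffDiagInCol.mulVec_apply_col [NonUnitalNonAssocSemiring R] (hM : M.OffDiagInCol p)
    (w : n → R) : (M *ᵥ w) p = M p p * w p :=
  Fintype.sum_eq_single p fun j hj => mul_eq_zero_of_left (hM p j hj hj) _

-- Only the identity permutation avoids every off-diagonal entry outside column `p`.
theorem OffDiagInCol.det_eq_prod_diag [DecidableEq n] [CommRing R] (hM : M.OffDiagInCol p) :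
    M.det = ∏ i, M i i := by
  rw [det_apply, Finset.sum_eq_single (1 : Equiv.Perm n) _ (by simp)]
  · simp
  · intro σ _ hσ
    obtain ⟨i, hip, hσi⟩ := Equiv.Perm.exists_ne_apply_ne_of_ne_one hσ p
    exact smul_eq_zero_of_right _
      (Finset.prod_eq_zero (Finset.mem_univ i) (hM _ _ hσi.symm hip))

end Matrix

section RepA

variable {F : Type*} [Field F] {n : ℕ} (x y : F) (v : Fin (n + 2 - 2) → F)

theorem offDiagInCol_RepA : (RepA F (n + 2) x y v).OffDiagInCol 0 := by
  intro i j hji hj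
  rw [Ne, Fin.ext_iff] at hji
  rw [Ne, Fin.ext_iff, Fin.val_zero] at hj
  simp only [RepA]
  split_ifs <;> first | rfl | omega

theorem det_RepA (hx : x ≠ 0) : (RepA F (n + 2) x y v).det = 1 := by
  rw [(offDiagInCol_RepA x y v).det_eq_prod_diag, Fintype.prod_eq_mul 0 1 zero_ne_one]
  · simp [RepA, hx]
  · rintro i ⟨hi0, hi1⟩
    rw [Ne, Fin.ext_iff, Fin.val_one] at hi1
    simp [RepA, hi0, hi1]

theorem exists_RepA_mulVec_eq (w : Fin (n + 2) → F) (hw : w 0 ≠ 0) :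
    ∃ y v, RepA F (n + 2) (w 0) y v *ᵥ w = Pi.single 0 1 := by
  refine ⟨-w 1, fun t => -w t.succ.succ / w 0, funext fun i => ?_⟩
  have hM := offDiagInCol_RepA (w 0) (-w 1) fun t => -w t.succ.succ / w 0
  rcases eq_or_ne i 0 with rfl | hi0
  · rw [hM.mulVec_apply_col]
    simp [RepA, hw]
  rw [hM.mulVec_apply_of_ne _ hi0, Pi.single_eq_of_ne hi0]
  rcases eq_or_ne i 1 with rfl | hi1
  · simp only [RepA, Fin.val_one, Fin.val_zero, one_ne_zero, ↓reduceDIte, ↓reduceIte]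
    ring
  · obtain ⟨i, rfl⟩ := Fin.exists_succ_eq.mpr hi0
    obtain ⟨i, rfl⟩ :=
      Fin.exists_succ_eq.mpr (show i ≠ 0 by rintro rfl; exact hi1 Fin.succ_zero_eq_one)
    simp [RepA, hw]

end RepA

section RepB

variable {F : Type*} [Field F] {k : ℕ} [NeZero k] {j : Fin k} (x : F)
  (v : Fin (k - (j - 1) - 2) → F)

theorem offDiagInCol_RepB_submatrix_cycleRange (hj : j ≠ 0) :
    ((RepB F k (j - 1) x v).submatrix (Fin.cycleRange j) id).OffDiagInCol j := by
  intro i l hli hlj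
  rw [← Fin.val_ne_zero_iff] at hj
  rw [Ne, Fin.ext_iff] at hli hlj
  simp only [submatrix_apply, id, RepB, Fin.val_cycleRange_apply]
  split_ifs <;> first | rfl | omega

theorem RepB_submatrix_cycleRange_apply_zero_zero (hj : j ≠ 0) :
    (RepB F k (j - 1) x v).submatrix (Fin.cycleRange j) id 0 0 = x := by
  have h1 : (Fin.cycleRange j 0 : ℕ) = 1 :=
    Fin.coe_cycleRange_of_lt (Fin.pos_iff_ne_zero.mpr hj)
  simp [RepB, h1]

theorem RepB_submatrix_cycleRange_apply_self_self (hj : j ≠ 0) :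
    (RepB F k (j - 1) x v).submatrix (Fin.cycleRange j) id j j = (-1) ^ (j : ℕ) * x⁻¹ := by
  rw [← Fin.val_ne_zero_iff] at hj
  simp [submatrix_apply, RepB, Nat.sub_add_cancel (Nat.one_le_iff_ne_zero.mpr hj)]

theorem RepB_submatrix_cycleRange_apply_self_of_ne (hj : j ≠ 0) {i : Fin k} (hi : i ≠ 0)
    (hij : i ≠ j) : (RepB F k (j - 1) x v).submatrix (Fin.cycleRange j) id i i = 1 := by
  rw [← Fin.val_ne_zero_iff] at hj hi
  rw [Ne, Fin.ext_iff] at hij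
  simp only [submatrix_apply, id, RepB, Fin.val_cycleRange_apply]
  split_ifs <;> first | rfl | omega | contradiction

theorem RepB_submatrix_cycleRange_apply_col_of_lt (hj : j ≠ 0) {i : Fin k} (hij : i < j) :
    (RepB F k (j - 1) x v).submatrix (Fin.cycleRange j) id i j = 0 := by
  rw [← Fin.val_ne_zero_iff] at hj
  rw [Fin.lt_def] at hij
  simp only [submatrix_apply, id, RepB, Fin.val_cycleRange_apply]
  split_ifs <;> first | rfl | omega | contradiction

theorem det_RepB (hj : j ≠ 0) (hx : x ≠ 0) : (RepB F k (j - 1) x v).det = 1 := by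
  have hdiag : ∏ i, (RepB F k (j - 1) x v).submatrix (Fin.cycleRange j) id i i =
      x * ((-1) ^ (j : ℕ) * x⁻¹) := by
    rw [Fintype.prod_eq_mul 0 j hj.symm
      fun i hi => RepB_submatrix_cycleRange_apply_self_of_ne x v hj hi.1 hi.2]
    exact congrArg₂ _ (RepB_submatrix_cycleRange_apply_zero_zero x v hj)
      (RepB_submatrix_cycleRange_apply_self_self x v hj)
  have hN := det_permute (Fin.cycleRange j) (RepB F k (j - 1) x v)
  rw [(offDiagInCol_RepB_submatrix_cycleRange x v hj).det_eq_prod_diag, hdiag,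
    Fin.sign_cycleRange, mul_left_comm, mul_inv_cancel₀ hx, mul_one] at hN
  push_cast at hN
  exact (mul_right_eq_self₀.mp hN.symm).resolve_right
    (pow_ne_zero _ (neg_ne_zero.mpr one_ne_zero))

theorem exists_RepB_mulVec_eq (w : Fin k → F) (hj : j ≠ 0) (hwj : w j ≠ 0)
    (hw : ∀ i < j, w i = 0) :
    ∃ x v, x ≠ 0 ∧ RepB F k (j - 1) x v *ᵥ w = Pi.single 0 1 := by
  have hj' : (j : ℕ) ≠ 0 := Fin.val_ne_zero_iff.mpr hj
  set x := (-1) ^ (j : ℕ) * w j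
  have hx : x ≠ 0 := mul_ne_zero (pow_ne_zero _ (neg_ne_zero.mpr one_ne_zero)) hwj
  set v : Fin (k - (j - 1) - 2) → F := fun t => -w ⟨t + j + 1, by omega⟩ / w j
  refine ⟨x, v, hx, funext fun i => ?_⟩
  obtain ⟨i, rfl⟩ := (Fin.cycleRange j).surjective i
  change ((RepB F k (j - 1) x v).submatrix (Fin.cycleRange j) id *ᵥ w) i = _
  have hM := offDiagInCol_RepB_submatrix_cycleRange x v hj
  rcases eq_or_ne i j with rfl | hij
  · rw [hM.mulVec_apply_col, RepB_submatrix_cycleRange_apply_self_self x v hj,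
      Fin.cycleRange_self, Pi.single_eq_same]
    simp only [x]
    field_simp
  rw [hM.mulVec_apply_of_ne _ hij, Pi.single_eq_of_ne]
  · rcases lt_or_gt_of_ne hij with hij | hji
    · rw [RepB_submatrix_cycleRange_apply_col_of_lt x v hj hij, hw i hij, zero_mul, mul_zero,
        add_zero]
    · rw [RepB_submatrix_cycleRange_apply_self_of_ne x v hj (ne_bot_of_gt hji) hji.ne', one_mul]
      simp only [submatrix_apply, id, Fin.cycleRange_of_gt hji, RepB]
      rw [Fin.lt_def] at hji
      rw [dif_neg (by omega), dif_neg (by omega), dif_neg (by omega), if_pos (by omega)]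
      have hi : (⟨i - (j - 1) - 2 + j + 1, by omega⟩ : Fin k) = i :=
        Fin.ext (by simp only; omega)
      simp only [v, hi, div_mul_cancel₀ _ hwj, neg_add_cancel]
  · rw [← Fin.cycleRange_self j]
    exact (Fin.cycleRange j).injective.ne hij

end RepB

/-- Coset representatives for `P\SL_k(F)`, where `P` is the subgroup of matrices of
block form `[[1, ξᵀ], [0, h]]` with `h ∈ SL_{k−1}(F)`, `ξ ∈ F^{k−1}` (equivalently,
the matrices in `SL_k(F)` whose first column is the first standard basis vector):
every `G ∈ SL_k(F)` can be multiplied on the left by some `M ∈ P` so that `M·G` has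
one of the two standard forms (i) or (ii). -/
theorem coset_reps_P (F : Type*) [Field F] (k : ℕ) (hk : 2 ≤ k)
    (G : Matrix.SpecialLinearGroup (Fin k) F) :
    ∃ M : Matrix.SpecialLinearGroup (Fin k) F,
      (∀ i j : Fin k, (j : ℕ) = 0 →
        M.val i j = if (i : ℕ) = 0 then 1 else 0) ∧
      ((∃ (x y : F) (v : Fin (k - 2) → F), x ≠ 0 ∧
          M.val * G.val = RepA F k x y v) ∨
       (∃ (a : ℕ) (ha : a ≤ k - 2) (x : F) (v : Fin (k - a - 2) → F), x ≠ 0 ∧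
          M.val * G.val = RepB F k a x v)) := by
  obtain ⟨n, rfl⟩ := Nat.exists_eq_add_of_le' hk
  set w := (G⁻¹ : SpecialLinearGroup (Fin (n + 2)) F).val *ᵥ Pi.single 0 1
  have hw : w ≠ 0 := fun h => one_ne_zero <| (G⁻¹).prop ▸
    exists_mulVec_eq_zero_iff.mp ⟨_, Pi.single_ne_zero_iff.mpr one_ne_zero, h⟩
  suffices ∃ R : SpecialLinearGroup (Fin (n + 2)) F, R.val *ᵥ w = Pi.single 0 1 ∧
      ((∃ x y v, x ≠ 0 ∧ R.val = RepA F (n + 2) x y v) ∨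
        ∃ a, ∃ _ : a ≤ n + 2 - 2, ∃ x v, x ≠ 0 ∧ R.val = RepB F (n + 2) a x v) by
    obtain ⟨R, hRw, hR⟩ := this
    have hMG : (R * G⁻¹).val * G.val = R.val := congrArg Subtype.val (inv_mul_cancel_right R G)
    refine ⟨R * G⁻¹, fun i j hj => ?_, hMG ▸ hR⟩
    obtain rfl : j = 0 := Fin.ext hj
    have hcol := congrFun hRw i
    rw [mulVec_mulVec, mulVec_single_one, Pi.single_apply] at hcol
    simp only [Fin.val_eq_zero_iff]
    exact hcol
  by_cases hw0 : w 0 ≠ 0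
  · obtain ⟨y, v, hRw⟩ := exists_RepA_mulVec_eq w hw0
    exact ⟨⟨_, det_RepA _ y v hw0⟩, hRw, Or.inl ⟨_, y, v, hw0, rfl⟩⟩
  obtain ⟨j, hwj, hmin⟩ :=
    WellFounded.has_min wellFounded_lt {i | w i ≠ 0} (Function.ne_iff.mp hw)
  have hj : j ≠ 0 := by rintro rfl; exact hw0 hwj
  obtain ⟨x, v, hx, hRw⟩ :=
    exists_RepB_mulVec_eq w hj hwj fun i hi => not_not.mp fun h => hmin i h hi
  exact ⟨⟨_, det_RepB x v hj hx⟩, hRw, Or.inr ⟨j - 1, by omega, x, v, hx, rfl⟩⟩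
end

section
/- Let F be a field and k ≥ 3. Let Q ≤ SL_k(F) be the subgroup of all matrices of block form [[h, hξ],[0, 1]] with h ∈ SL_{k−1}(F) and ξ ∈ F^{k−1} (this is the stabilizer of the last standard basis row vector (0, …, 0, 1) under right multiplication). Then for every G ∈ SL_k(F) there exists M ∈ Q such that M·G equals either (i) the block matrix [[I_{k−2}, 0, 0],[0, x, 0],[vᵀ, y, x^{-1}]] (row and column blocks of sizes k−2, 1, 1) for some x ∈ F^×, y ∈ F and v ∈ F^{k−2}, or (ii) for some integer a with 0 ≤ a ≤ k−2, the block matrix [[I_a, 0, 0, 0],[0, 0, I_{k−a−2}, 0],[0, 0, 0, x],[0, (−1)^{k+a+1} x^{-1}, vᵀ, 0]] (row blocks of sizes a, k−a−2, 1, 1; column blocks of sizes a, 1, k−a−2, 1) for some x ∈ F^× and v ∈ F^{k−a−2}. -/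
/-- Representative of type (i): the block matrix
`[[I_{k−2}, 0, 0], [0, x, 0], [vᵀ, y, x⁻¹]]` (row and column blocks of sizes `k−2, 1, 1`). -/
def RepA' (F : Type*) [Field F] (k : ℕ) (x y : F) (v : Fin (k - 2) → F) :
    Matrix (Fin k) (Fin k) F :=
  fun i j =>
    if (i : ℕ) < k - 2 then (if (j : ℕ) = (i : ℕ) then 1 else 0)
    else if (i : ℕ) = k - 2 then (if (j : ℕ) = k - 2 then x else 0)
    else
      -- the last row (vᵀ, y, x⁻¹)
      if hj : (j : ℕ) < k - 2 then v ⟨(j : ℕ), hj⟩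
      else if (j : ℕ) = k - 2 then y else x⁻¹

/-- Representative of type (ii): the block matrix
`[[I_a, 0, 0, 0], [0, 0, I_{k−a−2}, 0], [0, 0, 0, x], [0, (−1)^{k+a+1} x⁻¹, vᵀ, 0]]`
(row blocks of sizes `a, k−a−2, 1, 1`; column blocks of sizes `a, 1, k−a−2, 1`). -/
def RepB' (F : Type*) [Field F] (k a : ℕ) (x : F) (v : Fin (k - a - 2) → F) :
    Matrix (Fin k) (Fin k) F :=
  fun i j =>
    if (i : ℕ) < a then (if (j : ℕ) = (i : ℕ) then 1 else 0)
    else if (i : ℕ) < k - 2 then (if (j : ℕ) = (i : ℕ) + 1 then 1 else 0)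
    else if (i : ℕ) = k - 2 then (if (j : ℕ) = k - 1 then x else 0)
    else
      -- the last row (0, (−1)^{k+a+1} x⁻¹, vᵀ, 0)
      if (j : ℕ) = a then (-1) ^ (k + a + 1) * x⁻¹
      else if hj : a < (j : ℕ) ∧ (j : ℕ) < k - 1 then
        v ⟨(j : ℕ) - a - 1, by have := j.isLt; omega⟩
      else 0

lemma repA_tri (F : Type*) [Field F] (k : ℕ) (x y : F) (v : Fin (k - 2) → F) :
    (RepA' F k x y v).BlockTriangular OrderDual.toDual := by
  intro i j hij
  replace hij : (i : ℕ) < (j : ℕ) := hij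
  have hj := j.isLt
  unfold RepA'
  split_ifs <;> first | rfl | omega

lemma repA_det (F : Type*) [Field F] (k : ℕ) (hk : 3 ≤ k) (x y : F) (hx : x ≠ 0)
    (v : Fin (k - 2) → F) : (RepA' F k x y v).det = 1 := by
  rw [Matrix.det_of_lowerTriangular _ (repA_tri F k x y v)]
  have h2 : k - 2 < k := by omega
  have h1 : k - 1 < k := by omega
  have hne : (⟨k-2, h2⟩ : Fin k) ≠ ⟨k-1, h1⟩ := by
    simp only [ne_eq, Fin.mk.injEq]; omega
  have hother : ∀ i : Fin k, i ∈ Finset.univ →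
      i ∉ ({⟨k-2, h2⟩, ⟨k-1, h1⟩} : Finset (Fin k)) → RepA' F k x y v i i = 1 := by
    intro i _ hi
    simp only [Finset.mem_insert, Finset.mem_singleton, Fin.ext_iff] at hi
    push_neg at hi
    have hiv : (i : ℕ) < k - 2 := by have := i.isLt; omega
    simp [RepA', hiv]
  rw [← Finset.prod_subset (Finset.subset_univ _) hother, Finset.prod_pair hne]
  have e2 : RepA' F k x y v ⟨k-2, h2⟩ ⟨k-2, h2⟩ = x := by
    simp [RepA']
  have e1 : RepA' F k x y v ⟨k-1, h1⟩ ⟨k-1, h1⟩ = x⁻¹ := by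
    have hA : ¬(k - 1 < k - 2) := by omega
    have hB : k - 1 ≠ k - 2 := by omega
    simp [RepA', hA, hB]
  rw [e1, e2, mul_inv_cancel₀ hx]


lemma sigma_exists (m a : ℕ) (ha : a ≤ m) :
    ∃ σ : Equiv.Perm (Fin (m+1)),
      (Equiv.Perm.sign σ = (-1) ^ (m - a)) ∧
      (∀ i : Fin (m+1),
        ((i : ℕ) < a → (σ i : ℕ) = i) ∧
        ((i : ℕ) = m → (σ i : ℕ) = a) ∧
        (a ≤ (i : ℕ) → (i : ℕ) < m → (σ i : ℕ) = (i : ℕ) + 1)) := by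
  have haf : a < m + 1 := by omega
  have hj0 : m - a < m + 1 := by omega
  set af : Fin (m+1) := ⟨a, haf⟩ with haf'
  set j0 : Fin (m+1) := ⟨m - a, hj0⟩ with hj0'
  set σ : Equiv.Perm (Fin (m+1)) := (Equiv.addRight af).permCongr (Fin.cycleRange j0) with hσ
  have happ : ∀ t : Fin (m+1), (σ t : ℕ)
      = ((Fin.cycleRange j0 (t - af) : ℕ) + a) % (m+1) := by
    intro t
    rw [hσ, Equiv.permCongr_apply]
    simp only [Equiv.coe_addRight, Equiv.addRight_symm]
    rw [← sub_eq_add_neg]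
    show ((Fin.cycleRange j0 (t - af)) + af : Fin (m+1)).val = _
    rw [Fin.val_add]
  refine ⟨σ, ?_, ?_⟩
  · rw [hσ, Equiv.Perm.sign_permCongr, Fin.sign_cycleRange]
  · intro i
    have hilt := i.isLt
    refine ⟨?_, ?_, ?_⟩
    · -- i < a
      intro hia
      have hsub : i - af = ⟨m + 1 - a + (i:ℕ), by omega⟩ := by
        rw [Fin.sub_def]
        congr 1
        show ((m+1) - a + (i:ℕ)) % (m+1) = m + 1 - a + (i:ℕ)
        exact Nat.mod_eq_of_lt (by omega)
      have hgt : j0 < i - af := by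
        rw [hsub, Fin.lt_def]
        show m - a < m + 1 - a + (i:ℕ)
        omega
      rw [happ, Fin.cycleRange_of_gt hgt, hsub]
      show (m + 1 - a + (i:ℕ) + a) % (m+1) = (i:ℕ)
      have h3 : m + 1 - a + (i:ℕ) + a = (i:ℕ) + (m+1) := by omega
      rw [h3, Nat.add_mod_right]
      exact Nat.mod_eq_of_lt hilt
    · -- i = m
      intro him
      have hsub : i - af = j0 := by
        rw [Fin.sub_def]
        apply Fin.ext
        show ((m+1) - a + (i:ℕ)) % (m+1) = m - a
        have h3 : (m+1) - a + (i:ℕ) = (m - a) + (m+1) := by omega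
        rw [h3, Nat.add_mod_right]
        exact Nat.mod_eq_of_lt (by omega)
      rw [happ, hsub, Fin.cycleRange_self]
      show ((0:Fin (m+1)).val + a) % (m+1) = a
      rw [Fin.val_zero, Nat.zero_add]
      exact Nat.mod_eq_of_lt haf
    · -- a ≤ i < m
      intro hia him
      have hsub : i - af = ⟨(i:ℕ) - a, by omega⟩ := by
        rw [Fin.sub_def]
        congr 1
        show ((m+1) - a + (i:ℕ)) % (m+1) = (i:ℕ) - a
        have h3 : (m+1) - a + (i:ℕ) = ((i:ℕ) - a) + (m+1) := by omega
        rw [h3, Nat.add_mod_right]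
        exact Nat.mod_eq_of_lt (by omega)
      have hlt : i - af < j0 := by
        rw [hsub, Fin.lt_def]
        show (i:ℕ) - a < m - a
        omega
      rw [happ, Fin.coe_cycleRange_of_lt hlt, hsub]
      show ((i:ℕ) - a + 1 + a) % (m+1) = (i:ℕ) + 1
      have h3 : (i:ℕ) - a + 1 + a = (i:ℕ) + 1 := by omega
      rw [h3]
      exact Nat.mod_eq_of_lt (by omega)

lemma repB_det (F : Type*) [Field F] (k a : ℕ) (hk : 3 ≤ k) (ha : a ≤ k - 2) (x : F)
    (hx : x ≠ 0) (v : Fin (k - a - 2) → F) : (RepB' F k a x v).det = 1 := by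
  obtain ⟨m, rfl⟩ : ∃ m, k = m + 1 := ⟨k - 1, by omega⟩
  have hm : 2 ≤ m := by omega
  have ham : a ≤ m - 1 := by omega
  obtain ⟨σ, hsign, hval⟩ := sigma_exists m a (by omega)
  set B := (RepB' F (m+1) a x v).submatrix id σ with hB
  -- B is lower triangular
  have htri : B.BlockTriangular OrderDual.toDual := by
    intro i j hij
    replace hij : (i : ℕ) < (j : ℕ) := hij
    have hjlt := j.isLt
    have hilt := i.isLt
    obtain ⟨hv1, hv2, hv3⟩ := hval j
    show RepB' F (m+1) a x v i (σ j) = 0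
    -- compute (σ j : ℕ) case by case; in all cases entry is 0
    have hσj : ((j:ℕ) < a ∧ (σ j : ℕ) = j) ∨ ((j:ℕ) = m ∧ (σ j : ℕ) = a)
        ∨ (a ≤ (j:ℕ) ∧ (j:ℕ) < m ∧ (σ j : ℕ) = (j:ℕ) + 1) := by
      rcases lt_or_ge (j:ℕ) a with h | h
      · exact Or.inl ⟨h, hv1 h⟩
      · rcases eq_or_lt_of_le (Nat.le_of_lt_succ hjlt) with h2 | h2
        · exact Or.inr (Or.inl ⟨h2, hv2 h2⟩)
        · exact Or.inr (Or.inr ⟨h, h2, hv3 h h2⟩)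
    unfold RepB'
    rcases hσj with ⟨h1, h2⟩ | ⟨h1, h2⟩ | ⟨h1, h2, h3⟩ <;>
      split_ifs <;> first | rfl | omega
  have hdetB : B.det = ((Equiv.Perm.sign σ : ℤ) : F) * (RepB' F (m+1) a x v).det :=
    Matrix.det_permute' σ _
  -- diagonal product
  have hm1 : m - 1 < m + 1 := by omega
  have hmm : m < m + 1 := by omega
  have hne : (⟨m - 1, hm1⟩ : Fin (m+1)) ≠ ⟨m, hmm⟩ := by
    simp only [ne_eq, Fin.mk.injEq]; omega
  have hother : ∀ i : Fin (m+1), i ∈ Finset.univ →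
      i ∉ ({⟨m - 1, hm1⟩, ⟨m, hmm⟩} : Finset (Fin (m+1))) → B i i = 1 := by
    intro i _ hi
    simp only [Finset.mem_insert, Finset.mem_singleton, Fin.ext_iff] at hi
    push_neg at hi
    have hilt := i.isLt
    obtain ⟨hv1, hv2, hv3⟩ := hval i
    show RepB' F (m+1) a x v i (σ i) = 1
    rcases lt_or_ge (i:ℕ) a with h | h
    · have h2 := hv1 h
      unfold RepB'
      split_ifs <;> first | rfl | omega
    · have h2 := hv3 h (by omega)
      unfold RepB'
      split_ifs <;> first | rfl | omega
  have hd1 : B ⟨m - 1, hm1⟩ ⟨m - 1, hm1⟩ = x := by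
    obtain ⟨hv1, hv2, hv3⟩ := hval ⟨m - 1, hm1⟩
    simp only [Fin.val_mk] at hv1 hv2 hv3
    have h2 : σ ⟨m - 1, hm1⟩ = ⟨m, hmm⟩ := by
      apply Fin.ext
      rw [hv3 ham (by omega), Fin.val_mk]
      omega
    show RepB' F (m+1) a x v ⟨m - 1, hm1⟩ (σ ⟨m - 1, hm1⟩) = x
    rw [h2]
    unfold RepB'
    simp only [Fin.val_mk]
    split_ifs <;> first | rfl | omega
  have haa : a < m + 1 := by omega
  have hd2 : B ⟨m, hmm⟩ ⟨m, hmm⟩ = (-1) ^ (m + 1 + a + 1) * x⁻¹ := by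
    obtain ⟨hv1, hv2, hv3⟩ := hval ⟨m, hmm⟩
    simp only [Fin.val_mk] at hv1 hv2 hv3
    have h2 : σ ⟨m, hmm⟩ = ⟨a, haa⟩ := by
      apply Fin.ext
      simp only [Fin.val_mk]
      exact hv2 trivial
    show RepB' F (m+1) a x v ⟨m, hmm⟩ (σ ⟨m, hmm⟩) = _
    rw [h2]
    unfold RepB'
    simp only [Fin.val_mk]
    split_ifs <;> first | rfl | omega
  have hprod : B.det = x * ((-1) ^ (m + 1 + a + 1) * x⁻¹) := by
    rw [Matrix.det_of_lowerTriangular B htri,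
      ← Finset.prod_subset (Finset.subset_univ _) hother, Finset.prod_pair hne, hd1, hd2]
  rw [hprod, hsign] at hdetB
  have hcast : (((((-1:ℤˣ) ^ (m - a)) : ℤˣ) : ℤ) : F) = (-1 : F) ^ (m - a) := by
    push_cast
    rfl
  rw [hcast] at hdetB
  have h5 : (-1 : F) ^ (m - a) ≠ 0 := pow_ne_zero _ (by norm_num)
  apply mul_left_cancel₀ h5
  rw [mul_one, ← hdetB]
  have hxx : x * ((-1:F) ^ (m + 1 + a + 1) * x⁻¹) = (-1:F) ^ (m + 1 + a + 1) := by
    field_simp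
  rw [hxx]
  have h4 : m + 1 + a + 1 = (m - a) + 2 * (a + 1) := by omega
  rw [h4, pow_add, pow_mul]
  norm_num

open Matrix in
lemma last_row_helper {F : Type*} [Field F] {k : ℕ} (hk : 3 ≤ k)
    (G R : Matrix.SpecialLinearGroup (Fin k) F)
    (hrow : R.val ⟨k - 1, by omega⟩ = G.val ⟨k - 1, by omega⟩) :
    (∀ i j : Fin k, (i : ℕ) = k - 1 →
        (R * G⁻¹).val i j = if (j : ℕ) = k - 1 then 1 else 0)
    ∧ (R * G⁻¹).val * G.val = R.val := by
  constructor
  · intro i j hi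
    have hi' : i = ⟨k - 1, by omega⟩ := Fin.ext hi
    rw [hi']
    have e1 : (R * G⁻¹).val ⟨k - 1, by omega⟩ j
        = (G.val * (G⁻¹ : Matrix.SpecialLinearGroup (Fin k) F).val) ⟨k - 1, by omega⟩ j := by
      rw [Matrix.SpecialLinearGroup.coe_mul, Matrix.mul_apply, Matrix.mul_apply]
      apply Finset.sum_congr rfl
      intro l _
      rw [hrow]
    have e2 : G.val * (G⁻¹ : Matrix.SpecialLinearGroup (Fin k) F).val = 1 := by
      rw [← Matrix.SpecialLinearGroup.coe_mul, mul_inv_cancel]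
      rfl
    rw [e1, e2, Matrix.one_apply]
    by_cases hj : (j : ℕ) = k - 1
    · rw [if_pos hj, if_pos]
      exact Fin.ext (by simp [hj])
    · rw [if_neg hj, if_neg]
      intro hc
      exact hj (by rw [← hc])
  · have e3 : R * G⁻¹ * G = R := by group
    rw [← Matrix.SpecialLinearGroup.coe_mul, e3]

/-- Coset representatives for `Q\SL_k(F)`, where `Q` is the subgroup of matrices of
block form `[[h, hξ], [0, 1]]` with `h ∈ SL_{k−1}(F)`, `ξ ∈ F^{k−1}` (equivalently,
the matrices in `SL_k(F)` whose last row is `(0, …, 0, 1)`): every `G ∈ SL_k(F)` can be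
multiplied on the left by some `M ∈ Q` so that `M·G` has one of the two standard
forms (i) or (ii). -/
theorem coset_reps_Q (F : Type*) [Field F] (k : ℕ) (hk : 3 ≤ k)
    (G : Matrix.SpecialLinearGroup (Fin k) F) :
    ∃ M : Matrix.SpecialLinearGroup (Fin k) F,
      (∀ i j : Fin k, (i : ℕ) = k - 1 →
        M.val i j = if (j : ℕ) = k - 1 then 1 else 0) ∧
      ((∃ (x y : F) (v : Fin (k - 2) → F), x ≠ 0 ∧
          M.val * G.val = RepA' F k x y v) ∨
       (∃ (a : ℕ) (ha : a ≤ k - 2) (x : F) (v : Fin (k - a - 2) → F), x ≠ 0 ∧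
          M.val * G.val = RepB' F k a x v)) := by
  classical
  have hlast : k - 1 < k := by omega
  by_cases hcase : G.val ⟨k - 1, hlast⟩ ⟨k - 1, hlast⟩ ≠ 0
  · -- case A
    set x : F := (G.val ⟨k - 1, hlast⟩ ⟨k - 1, hlast⟩)⁻¹ with hxdef
    set y : F := G.val ⟨k - 1, hlast⟩ ⟨k - 2, by omega⟩ with hydef
    set v : Fin (k - 2) → F :=
      fun t => G.val ⟨k - 1, hlast⟩ ⟨(t : ℕ), lt_of_lt_of_le t.isLt (Nat.sub_le k 2)⟩ with hvdef
    have hx : x ≠ 0 := inv_ne_zero hcase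
    have hdet := repA_det F k hk x y hx v
    set R : Matrix.SpecialLinearGroup (Fin k) F := ⟨RepA' F k x y v, hdet⟩ with hRdef
    have hrow : R.val ⟨k - 1, by omega⟩ = G.val ⟨k - 1, by omega⟩ := by
      funext j
      have key : ∀ (c : ℕ) (hc : c < k), c = (j : ℕ) →
          G.val ⟨k - 1, hlast⟩ ⟨c, hc⟩ = G.val ⟨k - 1, hlast⟩ j := by
        intro c hc hcj
        subst hcj
        rw [Fin.eta]
      show RepA' F k x y v ⟨k - 1, hlast⟩ j = G.val ⟨k - 1, hlast⟩ j
      unfold RepA'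
      simp only [Fin.val_mk]
      have h1 : ¬(k - 1 < k - 2) := by omega
      have h2 : ¬(k - 1 = k - 2) := by omega
      rw [if_neg h1, if_neg h2]
      by_cases hj : (j : ℕ) < k - 2
      · rw [dif_pos hj]
      · rw [dif_neg hj]
        by_cases hj2 : (j : ℕ) = k - 2
        · rw [if_pos hj2, hydef]
          exact key (k - 2) (by omega) hj2.symm
        · rw [if_neg hj2, hxdef, inv_inv]
          exact key (k - 1) hlast (by have := j.isLt; omega)
    obtain ⟨hc1, hc2⟩ := last_row_helper hk G R hrow
    exact ⟨R * G⁻¹, hc1, Or.inl ⟨x, y, v, hx, hc2⟩⟩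
  · -- case B
    push_neg at hcase
    have hex : ∃ n, ∃ h : n < k, G.val ⟨k - 1, hlast⟩ ⟨n, h⟩ ≠ 0 := by
      by_contra hall
      push_neg at hall
      have hdet0 : G.val.det = 0 := by
        apply Matrix.det_eq_zero_of_row_eq_zero ⟨k - 1, hlast⟩
        intro j
        have := hall (j : ℕ) j.isLt
        rwa [Fin.eta] at this
      rw [G.prop] at hdet0
      exact one_ne_zero hdet0
    set a := Nat.find hex with hadef
    obtain ⟨hak, hga⟩ := Nat.find_spec hex
    have hmin : ∀ m (h : m < k), m < a → G.val ⟨k - 1, hlast⟩ ⟨m, h⟩ = 0 := by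
      intro m h hm
      have := Nat.find_min hex hm
      push_neg at this
      exact this h
    have halt : a ≤ k - 2 := by
      by_contra hcon
      have h1 : a = k - 1 := by omega
      apply hga
      have : (⟨a, hak⟩ : Fin k) = ⟨k - 1, hlast⟩ := Fin.ext h1
      rw [this]
      exact hcase
    set s : F := (-1) ^ (k + a + 1) with hsdef
    have hs : s * s = 1 := by
      rw [hsdef, ← pow_add]
      exact Even.neg_one_pow ⟨k + a + 1, by ring⟩
    have hs0 : s ≠ 0 := by
      rw [hsdef]
      exact pow_ne_zero _ (by norm_num)
    set g0 : F := G.val ⟨k - 1, hlast⟩ ⟨a, hak⟩ with hg0def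
    set x : F := s * g0⁻¹ with hxdef
    have hx : x ≠ 0 := mul_ne_zero hs0 (inv_ne_zero hga)
    have hxinv : s * x⁻¹ = g0 := by
      have h1 : x * (s * g0) = 1 := by
        rw [hxdef]
        have h0 : s * g0⁻¹ * (s * g0) = s * s * (g0⁻¹ * g0) := by ring
        rw [h0, hs, inv_mul_cancel₀ hga, mul_one]
      have h2 : x⁻¹ = s * g0 := inv_eq_of_mul_eq_one_right h1
      rw [h2, ← mul_assoc, hs, one_mul]
    set v : Fin (k - a - 2) → F :=
      fun t => G.val ⟨k - 1, hlast⟩ ⟨a + 1 + (t : ℕ), by have := t.isLt; omega⟩ with hvdef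
    have hdet := repB_det F k a hk halt x hx v
    set R : Matrix.SpecialLinearGroup (Fin k) F := ⟨RepB' F k a x v, hdet⟩ with hRdef
    have hrow : R.val ⟨k - 1, by omega⟩ = G.val ⟨k - 1, by omega⟩ := by
      funext j
      have key : ∀ (c : ℕ) (hc : c < k), c = (j : ℕ) →
          G.val ⟨k - 1, hlast⟩ ⟨c, hc⟩ = G.val ⟨k - 1, hlast⟩ j := by
        intro c hc hcj
        subst hcj
        rw [Fin.eta]
      show RepB' F k a x v ⟨k - 1, hlast⟩ j = G.val ⟨k - 1, hlast⟩ j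
      unfold RepB'
      simp only [Fin.val_mk]
      have h1 : ¬(k - 1 < a) := by omega
      have h2 : ¬(k - 1 < k - 2) := by omega
      have h3 : ¬(k - 1 = k - 2) := by omega
      rw [if_neg h1, if_neg h2, if_neg h3]
      by_cases hj : (j : ℕ) = a
      · rw [if_pos hj, ← hsdef, hxinv, hg0def]
        exact key a hak hj.symm
      · rw [if_neg hj]
        by_cases hj2 : a < (j : ℕ) ∧ (j : ℕ) < k - 1
        · rw [dif_pos hj2]
          exact key (a + 1 + ((j : ℕ) - a - 1)) (by have := j.isLt; omega) (by omega)
        · rw [dif_neg hj2]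
          push_neg at hj2
          rcases lt_or_ge (j : ℕ) a with hja | hja
          · rw [← Fin.eta j j.isLt]
            exact (hmin (j : ℕ) j.isLt hja).symm
          · have hja2 : (j : ℕ) = k - 1 := by
              rcases eq_or_lt_of_le hja with h | h
              · omega
              · have := hj2 h
                have := j.isLt
                omega
            have : j = ⟨k - 1, hlast⟩ := Fin.ext hja2
            rw [this]
            exact hcase.symm
    obtain ⟨hc1, hc2⟩ := last_row_helper hk G R hrow
    exact ⟨R * G⁻¹, hc1, Or.inr ⟨a, halt, x, v, hx, hc2⟩⟩
end
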